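/- arXiv:cond-mat/0505140 — 5 statements merged into one kernel-verified Lean document; each statement's English description precedes it below -/
import Mathlib

section
/- Let ρ = (1/4)(I⊗I + x(σ_x⊗σ_x + σ_y⊗σ_y) + z σ_z⊗σ_z) be a two-qubit operator, where σ_x, σ_y, σ_z are the Pauli matrices and x, z are real. Then ρ is positive semidefinite if and only if -1 ≤ z and z ≤ 1 - 2|x|. -/
open Matrix Kronecker ComplexOrder

/-- The Pauli matrix σ_x. -/
noncomputable def pauliX : Matrix (Fin 2) (Fin 2) ℂ := !![0, 1; 1, 0]
/-- The Pauli matrix σ_y. -/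
noncomputable def pauliY : Matrix (Fin 2) (Fin 2) ℂ := !![0, -Complex.I; Complex.I, 0]
/-- The Pauli matrix σ_z. -/
noncomputable def pauliZ : Matrix (Fin 2) (Fin 2) ℂ := !![1, 0; 0, -1]

private lemma quad_form (x z : ℝ) (v : Fin 2 × Fin 2 → ℂ) :
    star v ⬝ᵥ (((1 / 4 : ℂ) •
        ((1 : Matrix (Fin 2) (Fin 2) ℂ) ⊗ₖ (1 : Matrix (Fin 2) (Fin 2) ℂ)
          + (x : ℂ) • (pauliX ⊗ₖ pauliX + pauliY ⊗ₖ pauliY)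
          + (z : ℂ) • (pauliZ ⊗ₖ pauliZ))) *ᵥ v) =
      (((1 + z) / 4 * (Complex.normSq (v (0, 0)) + Complex.normSq (v (1, 1)))
        + (1 - z + 2 * x) / 8 * Complex.normSq (v (0, 1) + v (1, 0))
        + (1 - z - 2 * x) / 8 * Complex.normSq (v (0, 1) - v (1, 0)) : ℝ) : ℂ) := by
  simp [dotProduct, mulVec, Fintype.sum_prod_type, Fin.sum_univ_two, kroneckerMap_apply,
    pauliX, pauliY, pauliZ, Matrix.one_apply]
  simp [Complex.ext_iff, Complex.normSq_apply]
  constructor <;> ring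

/-- **Positivity region in the XX–ZZ plane.** The two-qubit operator
`ρ = (1/4)(I⊗I + x(σ_x⊗σ_x + σ_y⊗σ_y) + z σ_z⊗σ_z)` is positive semidefinite
iff `-1 ≤ z` and `z ≤ 1 - 2|x|`. -/
theorem xxz_state_posSemidef_iff (x z : ℝ) :
    ((1 / 4 : ℂ) •
        ((1 : Matrix (Fin 2) (Fin 2) ℂ) ⊗ₖ (1 : Matrix (Fin 2) (Fin 2) ℂ)
          + (x : ℂ) • (pauliX ⊗ₖ pauliX + pauliY ⊗ₖ pauliY)
          + (z : ℂ) • (pauliZ ⊗ₖ pauliZ))).PosSemidef ↔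
      -1 ≤ z ∧ z ≤ 1 - 2 * |x| := by
  constructor
  · intro h
    have h1 := h.dotProduct_mulVec_nonneg (fun p => if p = (0, 0) then 1 else 0)
    have h2 := h.dotProduct_mulVec_nonneg (fun p => if p = (0, 1) then 1 else if p = (1, 0) then 1 else 0)
    have h3 := h.dotProduct_mulVec_nonneg (fun p => if p = (0, 1) then 1 else if p = (1, 0) then -1 else 0)
    rw [quad_form] at h1 h2 h3
    simp only [Complex.zero_le_real] at h1 h2 h3
    norm_num [Complex.normSq_apply, Prod.ext_iff] at h1 h2 h3
    refine ⟨by linarith, ?_⟩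
    rcases abs_cases x with ⟨hx, _⟩ | ⟨hx, _⟩ <;> rw [hx] <;> linarith
  · rintro ⟨h1, h2⟩
    have hx1 : x ≤ |x| := le_abs_self x
    have hx2 : -x ≤ |x| := neg_le_abs x
    rw [posSemidef_iff_dotProduct_mulVec]
    constructor
    · rw [Matrix.IsHermitian]
      ext ⟨i, j⟩ ⟨k, l⟩
      fin_cases i <;> fin_cases j <;> fin_cases k <;> fin_cases l <;>
        simp [conjTranspose_apply, kroneckerMap_apply, pauliX, pauliY, pauliZ,
          Matrix.one_apply, Prod.ext_iff] <;> ring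
    · intro v
      rw [quad_form, Complex.zero_le_real]
      have n1 := Complex.normSq_nonneg (v (0, 0))
      have n2 := Complex.normSq_nonneg (v (1, 1))
      have n3 := Complex.normSq_nonneg (v (0, 1) + v (1, 0))
      have n4 := Complex.normSq_nonneg (v (0, 1) - v (1, 0))
      have c1 : (0:ℝ) ≤ (1 + z) / 4 := by linarith
      have c2 : (0:ℝ) ≤ (1 - z + 2 * x) / 8 := by linarith
      have c3 : (0:ℝ) ≤ (1 - z - 2 * x) / 8 := by linarith
      positivity
end

section
/- There is no positive semidefinite operator ρ_ABC on C² ⊗ C² ⊗ C² with trace 1 such that both partial traces Tr_C(ρ_ABC) and Tr_B(ρ_ABC) equal the projector |S⟩⟨S| onto the singlet state |S⟩ = (|01⟩ - |10⟩)/√2. -/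
open Matrix ComplexOrder

/-- The two-qubit singlet state vector `|S⟩ = (|01⟩ - |10⟩)/√2`. -/
noncomputable def singletVec : Fin 2 × Fin 2 → ℂ := fun p =>
  if p = (0, 1) then 1 / Real.sqrt 2
  else if p = (1, 0) then -(1 / Real.sqrt 2)
  else 0

/-- The projector `|S⟩⟨S|` onto the singlet state. -/
noncomputable def singletProj : Matrix (Fin 2 × Fin 2) (Fin 2 × Fin 2) ℂ :=
  Matrix.of fun i j => singletVec i * star (singletVec j)

/-- Partial trace over the third qubit. -/
noncomputable def ptraceC (ρ : Matrix (Fin 2 × Fin 2 × Fin 2) (Fin 2 × Fin 2 × Fin 2) ℂ) :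
    Matrix (Fin 2 × Fin 2) (Fin 2 × Fin 2) ℂ :=
  Matrix.of fun i j => ∑ c : Fin 2, ρ (i.1, i.2, c) (j.1, j.2, c)

/-- Partial trace over the second qubit. -/
noncomputable def ptraceB (ρ : Matrix (Fin 2 × Fin 2 × Fin 2) (Fin 2 × Fin 2 × Fin 2) ℂ) :
    Matrix (Fin 2 × Fin 2) (Fin 2 × Fin 2) ℂ :=
  Matrix.of fun i j => ∑ b : Fin 2, ρ (i.1, b, i.2) (j.1, b, j.2)

/-- A PSD matrix with a zero diagonal entry has zero column there. -/
lemma psd_col_zero {n : Type*} [Fintype n] [DecidableEq n]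
    {A : Matrix n n ℂ} (hA : A.PosSemidef) {i : n} (h : A i i = 0) (j : n) :
    A j i = 0 := by
  have hx : star (Pi.single i 1 : n → ℂ) ⬝ᵥ A *ᵥ (Pi.single i 1) = A i i := by
    simp [mulVec_single, dotProduct, Pi.single_apply, apply_ite]
  have h0 : A *ᵥ (Pi.single i 1) = 0 :=
    (hA.dotProduct_mulVec_zero_iff _).mp (by rw [hx, h])
  have := congrFun h0 j
  simpa [mulVec_single] using this

lemma psd_row_zero {n : Type*} [Fintype n] [DecidableEq n]
    {A : Matrix n n ℂ} (hA : A.PosSemidef) {i : n} (h : A i i = 0) (j : n) :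
    A i j = 0 := by
  have := congrFun (congrFun hA.1 j) i
  rw [conjTranspose_apply] at this
  have h2 : star (A i j) = 0 := this.trans (psd_col_zero hA h j)
  simpa using congrArg star h2

/-- **Monogamy of maximal entanglement.** There is no three-qubit state `ρ_ABC`
(positive semidefinite, trace one) whose reduced states on `AB` and on `AC` both
equal the singlet projector `|S⟩⟨S|`. -/
theorem no_shared_singlet :
    ¬ ∃ ρ : Matrix (Fin 2 × Fin 2 × Fin 2) (Fin 2 × Fin 2 × Fin 2) ℂ,
      ρ.PosSemidef ∧ ρ.trace = 1 ∧ ptraceC ρ = singletProj ∧ ptraceB ρ = singletProj := by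
  rintro ⟨ρ, hpsd, -, hC, hB⟩
  -- diagonal entries are nonnegative
  have hdiag : ∀ i, 0 ≤ ρ i i := fun i => by
    have := hpsd.dotProduct_mulVec_nonneg (Pi.single i 1)
    simpa [mulVec_single, dotProduct, Pi.single_apply, apply_ite] using this
  -- diagonal of ρ at (0,1,0) and (1,0,1) vanish, from Tr_B marginal
  have hB00 : ρ (0,0,0) (0,0,0) + ρ (0,1,0) (0,1,0) = 0 := by
    have := congrFun (congrFun hB ((0:Fin 2),(0:Fin 2))) ((0:Fin 2),(0:Fin 2))
    simpa [ptraceB, singletProj, singletVec, Fin.sum_univ_two] using this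
  have hB11 : ρ (1,0,1) (1,0,1) + ρ (1,1,1) (1,1,1) = 0 := by
    have := congrFun (congrFun hB ((1:Fin 2),(1:Fin 2))) ((1:Fin 2),(1:Fin 2))
    simpa [ptraceB, singletProj, singletVec, Fin.sum_univ_two] using this
  have h010 : ρ (0,1,0) (0,1,0) = 0 :=
    ((add_eq_zero_iff_of_nonneg (hdiag _) (hdiag _)).mp hB00).2
  have h101 : ρ (1,0,1) (1,0,1) = 0 :=
    ((add_eq_zero_iff_of_nonneg (hdiag _) (hdiag _)).mp hB11).1
  -- the off-diagonal condition from Tr_C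
  have hval : singletProj (0,1) (1,0) = -(1/2 : ℂ) := by
    simp [singletProj, singletVec]
    rw [← mul_inv, ← Complex.ofReal_mul, Real.mul_self_sqrt (by norm_num)]
    norm_num
  have hoff : ρ (0,1,0) (1,0,0) + ρ (0,1,1) (1,0,1) = -(1/2 : ℂ) := by
    have := congrFun (congrFun hC ((0:Fin 2),(1:Fin 2))) ((1:Fin 2),(0:Fin 2))
    rw [hval] at this
    simpa [ptraceC, Fin.sum_univ_two] using this
  rw [psd_row_zero hpsd h010, psd_col_zero hpsd h101] at hoff
  norm_num at hoff
end

section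
/- Let λ_n = c·z^n with multiplicity a(n), where 0 < z < 1, a(n) is the number of partitions of n into odd parts, and 1/c = Σ_{n≥0} a(n) z^n. Define n(D) implicitly by D = Σ_{m=0}^{n(D)} a(m) and ε(D) = c Σ_{m ≥ n(D)} a(m) z^m. Then for every k > 0 there exists D_0 such that for all D ≥ D_0, ε(D) ≤ D^{-k}; i.e., ε(D) decays faster than any inverse power of D. -/
set_option maxHeartbeats 1000000

open Filter Real Finset

/-- The number of partitions of `n` into odd parts. -/
def oddPartitions (n : ℕ) : ℕ := (Nat.Partition.odds n).card



/-- multiset sum monotone -/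
lemma msum_le_msum {s t : Multiset ℕ} (h : s ≤ t) : s.sum ≤ t.sum := by
  obtain ⟨u, rfl⟩ := Multiset.le_iff_exists_add.1 h
  simp


/-- Sum of a finset of naturals is at least 0+1+...+(card-1). -/
lemma sum_range_card_le (s : Finset ℕ) : ∑ i ∈ Finset.range s.card, i ≤ ∑ x ∈ s, x := by
  induction s using Finset.strongInduction with
  | _ s ih =>
    rcases s.eq_empty_or_nonempty with rfl | hne
    · simp
    · have hm := s.max'_mem hne
      set m := s.max' hne with hmdef
      have hcard : s.card ≤ m + 1 := by
        have : s ⊆ Finset.range (m + 1) := fun x hx =>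
          Finset.mem_range.2 (Nat.lt_succ_of_le (s.le_max' x hx))
        simpa using Finset.card_le_card this
      obtain ⟨t, ht⟩ : ∃ t, s.card = t + 1 :=
        ⟨s.card - 1, (Nat.succ_pred_eq_of_pos (Finset.card_pos.2 hne)).symm⟩
      have herase : (s.erase m).card = t := by
        rw [Finset.card_erase_of_mem hm, ht]; omega
      have h2 : ∑ i ∈ Finset.range t, i ≤ ∑ x ∈ s.erase m, x := by
        have := ih (s.erase m) (Finset.erase_ssubset hm)
        rwa [herase] at this
      have hs : ∑ x ∈ s, x = m + ∑ x ∈ s.erase m, x := (Finset.add_sum_erase _ _ hm).symm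
      rw [ht, Finset.sum_range_succ, hs]
      omega

/-- Number of subsets of `A` of size at most `r`. -/
lemma card_powerset_filter_le {α : Type*} [DecidableEq α] (A : Finset α) (r : ℕ) :
    (A.powerset.filter (fun s => s.card ≤ r)).card ≤ (r + 1) * (A.card + 1) ^ r := by
  have hsub : A.powerset.filter (fun s => s.card ≤ r) ⊆
      (Finset.range (r + 1)).biUnion (fun i => A.powersetCard i) := by
    intro s hs
    simp only [Finset.mem_filter, Finset.mem_powerset] at hs
    exact Finset.mem_biUnion.2 ⟨s.card, Finset.mem_range.2 (Nat.lt_succ_of_le hs.2),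
      (Finset.mem_powersetCard).2 ⟨hs.1, rfl⟩⟩
  calc (A.powerset.filter (fun s => s.card ≤ r)).card
      ≤ ((Finset.range (r + 1)).biUnion (fun i => A.powersetCard i)).card :=
        Finset.card_le_card hsub
    _ ≤ ∑ i ∈ Finset.range (r + 1), (A.powersetCard i).card := Finset.card_biUnion_le
    _ ≤ ∑ i ∈ Finset.range (r + 1), (A.card + 1) ^ r := by
        apply Finset.sum_le_sum
        intro i hi
        rw [Finset.card_powersetCard]
        calc A.card.choose i ≤ A.card ^ i := Nat.choose_le_pow _ _
          _ ≤ (A.card + 1) ^ i := Nat.pow_le_pow_left (Nat.le_succ _) _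
          _ ≤ (A.card + 1) ^ r := Nat.pow_le_pow_right (Nat.succ_pos _) (by
              exact Nat.lt_succ_iff.1 (Finset.mem_range.1 hi))
    _ = (r + 1) * (A.card + 1) ^ r := by simp [Finset.sum_const, Finset.card_range, mul_comm]


lemma partition_card_le (n : ℕ) :
    Fintype.card (Nat.Partition n) ≤
      (2 * Nat.sqrt n + 3) * ((n + 1) * (n + 1) + 1) ^ (2 * Nat.sqrt n + 2) := by
  classical
  set q := Nat.sqrt n with hq
  set r := 2 * q + 2 with hr
  set A : Finset (ℕ × ℕ) := Finset.range (n + 1) ×ˢ Finset.range (n + 1) with hA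
  set T : Finset (Finset (ℕ × ℕ)) := A.powerset.filter (fun s => s.card ≤ r) with hT
  have key : Fintype.card (Nat.Partition n) ≤ T.card := by
    apply Finset.card_le_card_of_injOn
      (fun p => p.parts.toFinset.image (fun v => (v, p.parts.count v)))
    · -- maps into T
      intro p _
      simp only [hT, Finset.mem_coe, Finset.mem_filter, Finset.mem_powerset]
      constructor
      · -- subset of A
        intro x hx
        simp only [Finset.mem_image, Multiset.mem_toFinset] at hx
        obtain ⟨v, hv, rfl⟩ := hx
        have hv1 : 1 ≤ v := p.parts_pos hv
        have hvn : v ≤ n := by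
          have := Multiset.single_le_sum (fun x _ => Nat.zero_le x) v hv
          rwa [p.parts_sum] at this
        have hcnt : p.parts.count v ≤ n := by
          have hrep : Multiset.replicate (p.parts.count v) v ≤ p.parts :=
            Multiset.le_count_iff_replicate_le.1 le_rfl
          have h1 : (Multiset.replicate (p.parts.count v) v).sum ≤ n := by
            have := msum_le_msum hrep
            rwa [p.parts_sum] at this
          have h2 : (Multiset.replicate (p.parts.count v) v).sum = p.parts.count v * v := by
            simp [Multiset.sum_replicate, smul_eq_mul]
          calc p.parts.count v ≤ p.parts.count v * v := Nat.le_mul_of_pos_right _ hv1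
            _ ≤ n := by rw [← h2]; exact h1
        simp [hA, Finset.mem_product, Nat.lt_succ_iff, hvn, hcnt]
      · -- card ≤ r
        refine le_trans (Finset.card_image_le) ?_
        set t := p.parts.toFinset.card with htdef
        by_contra hcon
        push_neg at hcon
        have htr : r + 1 ≤ t := hcon
        have hsum : ∑ x ∈ p.parts.toFinset, x ≤ n := by
          have hd : p.parts.dedup ≤ p.parts := Multiset.dedup_le _
          have := msum_le_msum hd
          rw [p.parts_sum] at this
          simpa [Finset.sum, Multiset.toFinset] using this
        have hgauss : (∑ i ∈ Finset.range t, i) * 2 = t * (t - 1) :=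
          Finset.sum_range_id_mul_two t
        have hle : ∑ i ∈ Finset.range t, i ≤ n :=
          le_trans (sum_range_card_le _) hsum
        have hqn : n < (q + 1) * (q + 1) := Nat.lt_succ_sqrt n
        have : t * (t - 1) ≤ 2 * n := by omega
        have h5 : (2 * q + 3) * (2 * q + 2) ≤ t * (t - 1) := by
          have h6 : 2 * q + 3 ≤ t := by omega
          exact Nat.mul_le_mul h6 (by omega)
        nlinarith
    · -- injective
      intro p hp p' hp' heq
      simp only at heq
      have hcount : ∀ v, p.parts.count v = p'.parts.count v := by
        have haux : ∀ (x y : Nat.Partition n),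
            (x.parts.toFinset.image (fun v => (v, x.parts.count v))
              = y.parts.toFinset.image (fun v => (v, y.parts.count v))) →
            ∀ v, 0 < x.parts.count v → x.parts.count v = y.parts.count v := by
          intro x y hxy v hv
          have hvmem : v ∈ x.parts.toFinset := by
            rw [Multiset.mem_toFinset]
            exact Multiset.count_pos.1 hv
          have : (v, x.parts.count v) ∈ y.parts.toFinset.image
              (fun w => (w, y.parts.count w)) := by
            rw [← hxy]
            exact Finset.mem_image_of_mem _ hvmem
          simp only [Finset.mem_image, Multiset.mem_toFinset, Prod.mk.injEq] at this
          obtain ⟨w, _, hw1, hw2⟩ := this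
          rw [← hw2, hw1]
        intro v
        rcases Nat.eq_zero_or_pos (p.parts.count v) with h0 | hpos
        · rcases Nat.eq_zero_or_pos (p'.parts.count v) with h0' | hpos'
          · rw [h0, h0']
          · have := haux p' p heq.symm v hpos'
            omega
        · exact haux p p' heq v hpos
      apply Nat.Partition.ext
      exact Multiset.ext.2 hcount
  calc Fintype.card (Nat.Partition n) ≤ T.card := key
    _ ≤ (r + 1) * (A.card + 1) ^ r := card_powerset_filter_le A r
    _ = (2 * q + 3) * ((n + 1) * (n + 1) + 1) ^ r := by
        simp [hA, Finset.card_product, Finset.card_range]; exact hr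


lemma oddPartitions_le (n : ℕ) : oddPartitions n ≤ (n + 2) ^ (4 * Nat.sqrt n + 6) := by
  have h1 : oddPartitions n ≤ Fintype.card (Nat.Partition n) := by
    rw [oddPartitions, Nat.Partition.odds]
    exact le_trans (Finset.card_filter_le _ _) (le_of_eq (Finset.card_univ))
  have h2 : Fintype.card (Nat.Partition n) ≤
      (2 * Nat.sqrt n + 3) * ((n + 1) * (n + 1) + 1) ^ (2 * Nat.sqrt n + 2) := by
    exact partition_card_le n
  set q := Nat.sqrt n with hqdef
  have hq : q ≤ n := Nat.sqrt_le_self n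
  calc oddPartitions n ≤ (2 * q + 3) * ((n + 1) * (n + 1) + 1) ^ (2 * q + 2) :=
        le_trans h1 h2
    _ ≤ (n + 2) ^ 2 * ((n + 2) ^ 2) ^ (2 * q + 2) := by
        apply Nat.mul_le_mul
        · nlinarith
        · exact Nat.pow_le_pow_left (by nlinarith) _
    _ = (n + 2) ^ (4 * q + 6) := by rw [← pow_mul, ← pow_add]; ring_nf
    
lemma nat_sqrt_le_real_sqrt (n : ℕ) : (Nat.sqrt n : ℝ) ≤ Real.sqrt n := by
  rw [Real.le_sqrt (by positivity) (Nat.cast_nonneg n)]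
  have := Nat.sqrt_le' n
  exact_mod_cast this

lemma summable_oddPartitions_mul_pow {u : ℝ} (hu0 : 0 < u) (hu1 : u < 1) :
    Summable (fun n : ℕ => (oddPartitions n : ℝ) * u ^ n) := by
  set v : ℝ := (1 + u) / 2 with hv
  have hv0 : 0 < v := by positivity
  have huv : u < v := by rw [hv]; linarith
  have hv1 : v < 1 := by rw [hv]; linarith
  set L : ℝ := Real.log (v / u) with hL
  have hL0 : 0 < L := Real.log_pos (by rw [lt_div_iff₀ hu0]; linarith)
  -- eventual bound
  have hlog := (isLittleO_log_rpow_atTop (by norm_num : (0:ℝ) < 1/2)).def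
    (by positivity : (0:ℝ) < L / 30)
  have htend : Tendsto (fun n : ℕ => ((n : ℝ) + 2)) atTop atTop :=
    tendsto_atTop_add_const_right _ 2 tendsto_natCast_atTop_atTop
  have hbig : ∀ᶠ n : ℕ in atTop, (oddPartitions n : ℝ) * u ^ n ≤ v ^ n := by
    filter_upwards [htend.eventually hlog, eventually_ge_atTop 1] with n hn hn1
    set x : ℝ := (n : ℝ) + 2 with hx
    have hx2 : (2:ℝ) ≤ x := by rw [hx]; exact_mod_cast by linarith [Nat.cast_nonneg (α := ℝ) n]
    have hx0 : (0:ℝ) < x := by linarith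
    have hlogx : Real.log x ≤ L / 30 * Real.sqrt x := by
      have h' : ‖Real.log x‖ ≤ L / 30 * ‖x ^ ((1:ℝ)/2)‖ := hn
      rw [Real.norm_eq_abs, Real.norm_eq_abs] at h'
      have : |Real.log x| ≤ L / 30 * |x ^ ((1:ℝ)/2)| := h'
      calc Real.log x ≤ |Real.log x| := le_abs_self _
        _ ≤ L / 30 * |x ^ ((1:ℝ)/2)| := this
        _ = L / 30 * Real.sqrt x := by
            rw [abs_of_nonneg (Real.rpow_nonneg hx0.le _), Real.sqrt_eq_rpow]
    -- main pointwise estimate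
    have hE : (oddPartitions n : ℝ) ≤ x ^ (4 * Nat.sqrt n + 6) := by
      have h := oddPartitions_le n
      rw [hx]
      have hcast : ((oddPartitions n : ℕ) : ℝ) ≤ (((n + 2) ^ (4 * Nat.sqrt n + 6) : ℕ) : ℝ) :=
        Nat.cast_le.2 h
      push_cast at hcast
      exact hcast
    have hEsqrt : (4 * (Nat.sqrt n : ℝ) + 6) ≤ 10 * Real.sqrt x := by
      have h1 : (Nat.sqrt n : ℝ) ≤ Real.sqrt x := by
        refine le_trans (nat_sqrt_le_real_sqrt n) (Real.sqrt_le_sqrt ?_)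
        rw [hx]; linarith
      have h2 : (1:ℝ) ≤ Real.sqrt x := by
        rw [show (1:ℝ) = Real.sqrt 1 by simp]
        exact Real.sqrt_le_sqrt (by linarith)
      linarith
    have hxpow : x ^ (4 * Nat.sqrt n + 6) ≤ (v / u) ^ n := by
      have hlx0 : 0 ≤ Real.log x := Real.log_nonneg (by linarith)
      have hexp : Real.log x * (4 * (Nat.sqrt n : ℝ) + 6) ≤ L * n := by
        calc Real.log x * (4 * (Nat.sqrt n : ℝ) + 6)
            ≤ (L / 30 * Real.sqrt x) * (10 * Real.sqrt x) := by
              apply mul_le_mul hlogx hEsqrt (by positivity) (by positivity)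
          _ = L / 3 * (Real.sqrt x * Real.sqrt x) := by ring
          _ = L / 3 * x := by rw [Real.mul_self_sqrt hx0.le]
          _ ≤ L * n := by
              rw [hx]
              have : (1:ℝ) ≤ n := by exact_mod_cast hn1
              nlinarith
      calc x ^ (4 * Nat.sqrt n + 6) = Real.exp (Real.log x * (4 * (Nat.sqrt n : ℝ) + 6)) := by
            rw [← Real.rpow_natCast x, Real.rpow_def_of_pos hx0]
            push_cast; ring_nf
        _ ≤ Real.exp (L * n) := Real.exp_le_exp.2 hexp
        _ = (v / u) ^ n := by
            rw [← Real.rpow_natCast (v/u) n, Real.rpow_def_of_pos (by positivity), hL]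
    calc (oddPartitions n : ℝ) * u ^ n ≤ (v / u) ^ n * u ^ n := by
          apply mul_le_mul (le_trans hE hxpow) le_rfl (by positivity)
          positivity
      _ = v ^ n := by
          rw [div_pow, div_mul_cancel₀]
          exact pow_ne_zero _ (ne_of_gt hu0)
  -- conclude summability
  have hgeo : Summable (fun n : ℕ => v ^ n) := summable_geometric_of_lt_one hv0.le hv1
  apply summable_of_isBigO_nat hgeo
  rw [Asymptotics.isBigO_iff]
  refine ⟨1, ?_⟩
  filter_upwards [hbig] with n hn
  rw [one_mul, Real.norm_eq_abs, Real.norm_eq_abs, abs_of_nonneg (by positivity),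
    abs_of_nonneg (by positivity : (0:ℝ) ≤ v ^ n)]
  exact hn

lemma one_le_oddPartitions (m : ℕ) : 1 ≤ oddPartitions m := by
  rw [oddPartitions]
  apply Finset.card_pos.2
  refine ⟨⟨Multiset.replicate m 1, ?_, by simp⟩, ?_⟩
  · intro i hi
    rw [Multiset.eq_of_mem_replicate hi]
    norm_num
  · rw [Nat.Partition.odds, Nat.Partition.restricted, Finset.mem_filter]
    refine ⟨Finset.mem_univ _, ?_⟩
    intro i hi
    rw [Multiset.eq_of_mem_replicate hi]
    decide

/-- **Superpolynomial decay of the XXZ truncation error.** Let the entanglement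
spectrum consist of the eigenvalues `c z^n`, each with multiplicity `a(n)` the number
of partitions of `n` into odd parts, where `0 < z < 1` and `1/c = Σ_{n≥0} a(n) z^n`.
With `n(D)` defined by `D = Σ_{m=0}^{n(D)} a(m)` and
`ε(D) = c Σ_{m ≥ n(D)} a(m) z^m`, for every `k > 0` there is `D₀` such that for all
`D ≥ D₀`, `ε(D) ≤ D^{-k}`. -/
theorem xxz_truncation_error_superpolynomial (z : ℝ) (hz0 : 0 < z) (hz1 : z < 1)
    (c : ℝ) (hc : c = (∑' n : ℕ, (oddPartitions n : ℝ) * z ^ n)⁻¹) (k : ℝ) (hk : 0 < k) :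
    ∃ D₀ : ℕ, ∀ D : ℕ, D₀ ≤ D → ∀ nD : ℕ,
      D = ∑ m ∈ Finset.range (nD + 1), oddPartitions m →
      c * ∑' j : ℕ, (oddPartitions (nD + j) : ℝ) * z ^ (nD + j) ≤ (D : ℝ) ^ (-k) := by
  classical
  have hk1 : (0:ℝ) < k + 1 := by linarith
  set e : ℝ := 1 / (2 * (k + 1)) with he
  have he0 : 0 < e := by positivity
  have he1 : e ≤ 1 := by
    rw [he, div_le_one (by linarith)]
    linarith
  set u : ℝ := z ^ e with hu
  have hu0 : 0 < u := Real.rpow_pos_of_pos hz0 e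
  have hu1 : u < 1 := Real.rpow_lt_one hz0.le hz1 he0
  have hzu : z ≤ u := by
    calc z = z ^ (1:ℝ) := (Real.rpow_one z).symm
      _ ≤ z ^ e := Real.rpow_le_rpow_of_exponent_ge hz0 hz1.le he1
  set w : ℝ := z ^ ((1:ℝ)/2) with hw
  have hw0 : 0 < w := Real.rpow_pos_of_pos hz0 _
  have hw1 : w < 1 := Real.rpow_lt_one hz0.le hz1 (by norm_num)
  have hkey : z / u = w * u ^ k := by
    have h1 : z / u = z ^ (1 - e) := by
      rw [Real.rpow_sub hz0, Real.rpow_one]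
    have h2 : u ^ k = z ^ (e * k) := by
      rw [hu, ← Real.rpow_mul hz0.le]
    have h3 : w * u ^ k = z ^ ((1:ℝ)/2 + e * k) := by
      rw [hw, h2, ← Real.rpow_add hz0]
    rw [h1, h3]
    congr 1
    rw [he]
    field_simp
    ring
  -- summability
  have hSu := summable_oddPartitions_mul_pow hu0 hu1
  have hSz := summable_oddPartitions_mul_pow hz0 hz1
  set S : ℝ := ∑' m : ℕ, (oddPartitions m : ℝ) * u ^ m with hS
  have hterm_le : ∀ m : ℕ, (oddPartitions m : ℝ) * u ^ m ≤ S := by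
    intro m
    exact Summable.le_tsum hSu m (fun j _ => by positivity)
  have hS1 : 1 ≤ S := by
    have := hterm_le 0
    have h0 : (1:ℝ) ≤ (oddPartitions 0 : ℝ) := by exact_mod_cast one_le_oddPartitions 0
    simpa using le_trans (by simpa using h0) this
  have hS0 : 0 < S := by linarith
  -- c
  have hSz1 : 1 ≤ ∑' m : ℕ, (oddPartitions m : ℝ) * z ^ m := by
    have hterm := Summable.le_tsum hSz 0 (fun j _ => by positivity)
    have h0 : (1:ℝ) ≤ (oddPartitions 0 : ℝ) := by exact_mod_cast one_le_oddPartitions 0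
    simpa using le_trans (by simpa using h0) hterm
  have hc0 : 0 < c := by rw [hc]; exact inv_pos.2 (by linarith)
  set M : ℝ := S / (1 - u) with hM
  have hM0 : 0 < M := by apply div_pos hS0; linarith
  set x : ℝ := u⁻¹ with hxdef
  have hx1 : 1 < x := by rw [hxdef]; exact one_lt_inv_iff₀.2 ⟨hu0, hu1⟩
  have hx0 : 0 < x := by linarith
  set C : ℝ := c * S * M ^ k with hC
  have hMk0 : 0 < M ^ k := Real.rpow_pos_of_pos hM0 k
  have hC0 : 0 < C := by positivity
  -- choose n₁
  have htendC : Tendsto (fun n : ℕ => C * w ^ n) atTop (nhds 0) := by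
    have := (tendsto_pow_atTop_nhds_zero_of_lt_one hw0.le hw1).const_mul C
    simpa using this
  have hev : ∀ᶠ n : ℕ in atTop, C * w ^ n < 1 :=
    htendC.eventually (gt_mem_nhds (by norm_num : (0:ℝ) < 1))
  obtain ⟨n₁, hn₁⟩ := eventually_atTop.1 hev
  refine ⟨⌈M * x ^ n₁⌉₊ + 1, ?_⟩
  intro D hD nD hDsum
  -- lower bound on D
  have hD_lb : nD + 1 ≤ D := by
    rw [hDsum]
    calc nD + 1 = ∑ _m ∈ Finset.range (nD + 1), 1 := by simp
      _ ≤ ∑ m ∈ Finset.range (nD + 1), oddPartitions m :=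
        Finset.sum_le_sum (fun m _ => one_le_oddPartitions m)
  have hD0 : (0:ℝ) < D := by exact_mod_cast Nat.lt_of_lt_of_le (Nat.succ_pos _) hD_lb
  -- upper bound on D
  have hD_le : (D:ℝ) ≤ M * x ^ nD := by
    have hcast : (D:ℝ) = ∑ m ∈ Finset.range (nD + 1), (oddPartitions m : ℝ) := by
      rw [hDsum]; push_cast; ring
    have hterm : ∀ m, (oddPartitions m : ℝ) ≤ S * x ^ m := by
      intro m
      have h1 := hterm_le m
      have hum : 0 < u ^ m := by positivity
      rw [hxdef, inv_pow, ← div_eq_mul_inv, le_div_iff₀ hum]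
      linarith [h1]
    calc (D:ℝ) = ∑ m ∈ Finset.range (nD + 1), (oddPartitions m : ℝ) := hcast
      _ ≤ ∑ m ∈ Finset.range (nD + 1), S * x ^ m :=
          Finset.sum_le_sum (fun m _ => hterm m)
      _ = S * ∑ m ∈ Finset.range (nD + 1), x ^ m := by rw [Finset.mul_sum]
      _ = S * ((x ^ (nD + 1) - 1) / (x - 1)) := by rw [geom_sum_eq (ne_of_gt hx1)]
      _ ≤ S * (x ^ (nD + 1) / (x - 1)) := by
          apply mul_le_mul_of_nonneg_left _ hS0.le
          have hx1' : (0:ℝ) < x - 1 := by linarith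
          exact (div_le_div_iff_of_pos_right hx1').2 (by linarith)
      _ = M * x ^ nD := by
          have hxu : x * u = 1 := by rw [hxdef]; exact inv_mul_cancel₀ hu0.ne'
          have hu1' : (0:ℝ) < 1 - u := by linarith
          have hx1' : (0:ℝ) < x - 1 := by
            have : 1 - u < x - u * x := by nlinarith
            nlinarith
          have hdiv : x ^ (nD + 1) / (x - 1) = x ^ nD / (1 - u) := by
            rw [div_eq_div_iff hx1'.ne' hu1'.ne', pow_succ]
            linear_combination (-(x ^ nD : ℝ)) * hxu
          rw [hdiv, hM]
          ring
  -- nD ≥ n₁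
  have hn₁le : n₁ ≤ nD := by
    by_contra hcon
    push_neg at hcon
    have h1 : (D:ℝ) ≤ M * x ^ n₁ := by
      refine le_trans hD_le ?_
      apply mul_le_mul_of_nonneg_left _ hM0.le
      exact pow_le_pow_right₀ hx1.le hcon.le
    have h2 : D ≤ ⌈M * x ^ n₁⌉₊ := by
      have := le_trans h1 (Nat.le_ceil _)
      exact_mod_cast this
    omega
  -- tail bound
  have hsum_shift : Summable (fun j : ℕ => (oddPartitions (nD + j) : ℝ) * u ^ (nD + j)) := by
    have h := hSu.comp_injective (add_right_injective nD)
    exact h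
  have hzsum : Summable (fun j : ℕ => (oddPartitions (nD + j) : ℝ) * z ^ (nD + j)) := by
    have h := hSz.comp_injective (add_right_injective nD)
    exact h
  have htail : ∑' j : ℕ, (oddPartitions (nD + j) : ℝ) * z ^ (nD + j) ≤ (z/u)^nD * S := by
    have hle : ∀ j : ℕ, (oddPartitions (nD + j) : ℝ) * z ^ (nD + j) ≤
        (z/u)^nD * ((oddPartitions (nD + j) : ℝ) * u ^ (nD + j)) := by
      intro j
      have h1 : z ^ (nD + j) = (z/u) ^ (nD + j) * u ^ (nD + j) := by
        rw [div_pow, div_mul_cancel₀]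
        exact pow_ne_zero _ hu0.ne'
      have h2 : (z/u) ^ (nD + j) ≤ (z/u) ^ nD :=
        pow_le_pow_of_le_one (by positivity) ((div_le_one hu0).2 hzu) (Nat.le_add_right _ _)
      have h3 : (0:ℝ) ≤ (oddPartitions (nD + j) : ℝ) * u ^ (nD + j) := by positivity
      calc (oddPartitions (nD + j) : ℝ) * z ^ (nD + j)
          = (z/u) ^ (nD + j) * ((oddPartitions (nD + j) : ℝ) * u ^ (nD + j)) := by
            rw [h1]; ring
        _ ≤ (z/u) ^ nD * ((oddPartitions (nD + j) : ℝ) * u ^ (nD + j)) :=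
            mul_le_mul_of_nonneg_right h2 h3
    calc ∑' j : ℕ, (oddPartitions (nD + j) : ℝ) * z ^ (nD + j)
        ≤ ∑' j : ℕ, (z/u)^nD * ((oddPartitions (nD + j) : ℝ) * u ^ (nD + j)) :=
          Summable.tsum_le_tsum hle hzsum (hsum_shift.mul_left _)
      _ = (z/u)^nD * ∑' j : ℕ, (oddPartitions (nD + j) : ℝ) * u ^ (nD + j) := tsum_mul_left
      _ ≤ (z/u)^nD * S := by
          apply mul_le_mul_of_nonneg_left _ (by positivity)
          exact Summable.tsum_le_tsum_of_inj (fun j => nD + j) (add_right_injective nD)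
            (fun m _ => by positivity) (fun j => le_rfl) hsum_shift hSu
  -- final chain
  have hrhs : M^(-k) * (u^k)^nD ≤ (D:ℝ)^(-k) := by
    have h2 : (M * x^nD) ^ (-k) ≤ (D:ℝ) ^ (-k) :=
      Real.rpow_le_rpow_of_nonpos hD0 hD_le (neg_nonpos.2 hk.le)
    have h3 : (M * x^nD) ^ (-k) = M^(-k) * (u^k)^nD := by
      rw [Real.mul_rpow hM0.le (by positivity)]
      congr 1
      rw [← Real.rpow_natCast x nD, ← Real.rpow_mul hx0.le,
        ← Real.rpow_natCast (u ^ k) nD, ← Real.rpow_mul hu0.le,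
        hxdef, ← Real.rpow_neg_one u, ← Real.rpow_mul hu0.le]
      congr 1
      ring
    rw [← h3]
    exact h2
  have hcs : c * S * w^nD ≤ M^(-k) := by
    have hmneg : M^(-k) = (M^k)⁻¹ := Real.rpow_neg hM0.le k
    have hCw : C * w ^ nD ≤ 1 := (hn₁ nD hn₁le).le
    rw [hmneg]
    calc c * S * w^nD = (C * w^nD) / M^k := by
          rw [hC]; field_simp
      _ ≤ 1 / M^k := (div_le_div_iff_of_pos_right hMk0).2 hCw
      _ = (M^k)⁻¹ := one_div _
  have hmain : c * ((z/u)^nD * S) ≤ M^(-k) * (u^k)^nD := by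
    have hzu_pow : (z/u)^nD = w^nD * (u^k)^nD := by rw [hkey, mul_pow]
    calc c * ((z/u)^nD * S) = (c * S * w^nD) * (u^k)^nD := by rw [hzu_pow]; ring
      _ ≤ M^(-k) * (u^k)^nD := by
          apply mul_le_mul_of_nonneg_right hcs
          positivity
  calc c * ∑' j : ℕ, (oddPartitions (nD + j) : ℝ) * z ^ (nD + j)
      ≤ c * ((z/u)^nD * S) := mul_le_mul_of_nonneg_left htail hc0.le
    _ ≤ (D:ℝ)^(-k) := le_trans hmain hrhs
end

section
/- Let A^1, ..., A^d be n×n complex matrices satisfying the gauge condition Σ_i A^i A^{i†} = I, and let Λ be a positive semidefinite diagonal matrix with Tr Λ = 1 satisfying Σ_i A^{i†} Λ A^i = Λ. Let P be an orthogonal projector. Then Σ_{i,i',j,j'=1}^d |Tr[A^{j†} Λ A^i P A^{i'} A^{j'†}]| ≤ d² √(Tr[P Λ P]). -/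
open Matrix ComplexOrder

private lemma trace_conjTranspose_mul_re {n : ℕ} (M : Matrix (Fin n) (Fin n) ℂ) :
    ((Mᴴ * M).trace).re = ∑ a, ∑ b, Complex.normSq (M b a) := by
  simp [Matrix.trace, Matrix.diag, Matrix.mul_apply, Matrix.conjTranspose_apply,
    Complex.normSq_eq_conj_mul_self]
  simp [Complex.normSq_apply]

private lemma trace_conjTranspose_mul_re_nonneg {n : ℕ} (M : Matrix (Fin n) (Fin n) ℂ) :
    0 ≤ ((Mᴴ * M).trace).re := by
  rw [trace_conjTranspose_mul_re]
  exact Finset.sum_nonneg fun a _ => Finset.sum_nonneg fun b _ => Complex.normSq_nonneg _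

private lemma abs_trace_mul_le {n : ℕ} (M N : Matrix (Fin n) (Fin n) ℂ) :
    ‖(M * N).trace‖ ≤
      Real.sqrt ((Mᴴ * M).trace.re) * Real.sqrt ((Nᴴ * N).trace.re) := by
  have h1 : ‖(M * N).trace‖ ≤
      ∑ p : Fin n × Fin n, ‖M p.1 p.2‖ * ‖N p.2 p.1‖ := by
    have : (M * N).trace = ∑ p : Fin n × Fin n, M p.1 p.2 * N p.2 p.1 := by
      rw [Fintype.sum_prod_type]
      simp [Matrix.trace, Matrix.diag, Matrix.mul_apply]
    rw [this]
    refine le_trans (norm_sum_le _ _) (le_of_eq ?_)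
    simp [_root_.map_mul]
  have h2 := Finset.sum_mul_sq_le_sq_mul_sq Finset.univ
    (fun p : Fin n × Fin n => ‖M p.1 p.2‖)
    (fun p : Fin n × Fin n => ‖N p.2 p.1‖)
  have hM : ∑ p : Fin n × Fin n, ‖M p.1 p.2‖ ^ 2 = (Mᴴ * M).trace.re := by
    rw [trace_conjTranspose_mul_re, Fintype.sum_prod_type]
    rw [Finset.sum_comm]
    simp [Complex.sq_norm]
  have hN : ∑ p : Fin n × Fin n, ‖N p.2 p.1‖ ^ 2 = (Nᴴ * N).trace.re := by
    rw [trace_conjTranspose_mul_re, Fintype.sum_prod_type]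
    simp [Complex.sq_norm]
  refine h1.trans ?_
  have hnn : 0 ≤ ∑ p : Fin n × Fin n, ‖M p.1 p.2‖ * ‖N p.2 p.1‖ := by
    positivity
  calc ∑ p : Fin n × Fin n, ‖M p.1 p.2‖ * ‖N p.2 p.1‖
      = Real.sqrt ((∑ p : Fin n × Fin n, ‖M p.1 p.2‖ * ‖N p.2 p.1‖) ^ 2) :=
        (Real.sqrt_sq hnn).symm
    _ ≤ Real.sqrt ((Mᴴ * M).trace.re * (Nᴴ * N).trace.re) := by
        refine Real.sqrt_le_sqrt ?_
        rw [← hM, ← hN]; exact h2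
    _ = _ := Real.sqrt_mul (trace_conjTranspose_mul_re_nonneg M) _

set_option maxHeartbeats 1000000 in
/-- **Cauchy–Schwarz bound for the truncated MPS transfer sum.** Let `A^1, …, A^d` be
`n×n` complex matrices in canonical gauge, `Σ_i A^i (A^i)ᴴ = 1`, and let `Λ` be a
positive semidefinite diagonal matrix with unit trace satisfying
`Σ_i (A^i)ᴴ Λ A^i = Λ`. For any orthogonal projector `P`,
`Σ_{i,i',j,j'} |Tr[(A^j)ᴴ Λ A^i P A^{i'} (A^{j'})ᴴ]| ≤ d² √(Tr[P Λ P])`. -/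
theorem mps_transfer_cauchy_schwarz_bound {n d : ℕ}
    (A : Fin d → Matrix (Fin n) (Fin n) ℂ)
    (hgauge : ∑ i, A i * (A i)ᴴ = 1)
    (f : Fin n → ℝ) (hf0 : ∀ i, 0 ≤ f i) (hf1 : ∑ i, f i = 1)
    (Λ : Matrix (Fin n) (Fin n) ℂ) (hΛ : Λ = Matrix.diagonal fun i => (f i : ℂ))
    (hinv : ∑ i, (A i)ᴴ * Λ * A i = Λ)
    (P : Matrix (Fin n) (Fin n) ℂ) (hP1 : Pᴴ = P) (hP2 : P * P = P) :
    ∑ i : Fin d, ∑ i' : Fin d, ∑ j : Fin d, ∑ j' : Fin d,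
        ‖((A j)ᴴ * Λ * A i * P * A i' * (A j')ᴴ).trace‖ ≤
      (d : ℝ) ^ 2 * Real.sqrt ((P * Λ * P).trace.re) := by
  set S : Matrix (Fin n) (Fin n) ℂ :=
    Matrix.diagonal (fun i => (Real.sqrt (f i) : ℂ)) with hS
  have hSH : Sᴴ = S := by
    simp [hS, Matrix.diagonal_conjTranspose, Function.comp]
  have hSS : S * S = Λ := by
    rw [hS, hΛ, Matrix.diagonal_mul_diagonal]
    exact congrArg Matrix.diagonal (funext fun i => by
      rw [← Complex.ofReal_mul, Real.mul_self_sqrt (hf0 i)])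
  set M : Fin d → Fin d → Matrix (Fin n) (Fin n) ℂ :=
    fun i i' => S * A i * P * A i' with hM
  set N : Fin d → Fin d → Matrix (Fin n) (Fin n) ℂ :=
    fun j j' => (A j')ᴴ * (A j)ᴴ * S with hN
  -- trace rewriting
  have hT : ∀ i i' j j', ((A j)ᴴ * Λ * A i * P * A i' * (A j')ᴴ).trace
      = (M i i' * N j j').trace := by
    intro i i' j j'
    have e1 : (A j)ᴴ * Λ * A i * P * A i' * (A j')ᴴ
        = (A j)ᴴ * S * (S * A i * P * A i' * (A j')ᴴ) := by
      rw [← hSS]; simp only [mul_assoc]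
    rw [e1, Matrix.trace_mul_comm]
    refine congrArg Matrix.trace ?_
    simp only [hM, hN, mul_assoc]
  -- sum of ‖M‖² equals Tr PΛP
  have hB : ∑ i : Fin d, ∑ i' : Fin d, ((M i i')ᴴ * M i i').trace = (P * Λ * P).trace := by
    have step1 : ∀ i i', ((M i i')ᴴ * M i i').trace
        = ((P * ((A i)ᴴ * Λ * A i) * P) * (A i' * (A i')ᴴ)).trace := by
      intro i i'
      have e : (M i i')ᴴ * M i i' = (A i')ᴴ * ((P * ((A i)ᴴ * Λ * A i) * P) * A i') := by
        simp only [hM, Matrix.conjTranspose_mul, hP1, hSH, ← hSS, mul_assoc]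
      rw [e, Matrix.trace_mul_comm]
      congr 1
      simp only [mul_assoc]
    calc ∑ i : Fin d, ∑ i' : Fin d, ((M i i')ᴴ * M i i').trace
        = ∑ i : Fin d, ∑ i' : Fin d,
            ((P * ((A i)ᴴ * Λ * A i) * P) * (A i' * (A i')ᴴ)).trace := by
          exact Finset.sum_congr rfl fun i _ => Finset.sum_congr rfl fun i' _ => step1 i i'
      _ = ∑ i : Fin d, ((P * ((A i)ᴴ * Λ * A i) * P) * (∑ i' : Fin d, A i' * (A i')ᴴ)).trace := by
          refine Finset.sum_congr rfl fun i _ => ?_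
          rw [Finset.mul_sum, Matrix.trace_sum]
      _ = ∑ i : Fin d, (P * ((A i)ᴴ * Λ * A i) * P).trace := by
          rw [hgauge]; simp
      _ = ((∑ i : Fin d, P * ((A i)ᴴ * Λ * A i) * P)).trace := (Matrix.trace_sum _ _).symm
      _ = (P * Λ * P).trace := by
          congr 1
          calc ∑ i : Fin d, P * ((A i)ᴴ * Λ * A i) * P
              = P * (∑ i : Fin d, (A i)ᴴ * Λ * A i) * P := by
                rw [Finset.mul_sum, Finset.sum_mul]
            _ = P * Λ * P := by rw [hinv]
  -- sum of ‖N‖² equals Tr Λ = 1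
  have hC : ∑ j : Fin d, ∑ j' : Fin d, ((N j j')ᴴ * N j j').trace = 1 := by
    have step1 : ∀ j j', ((N j j')ᴴ * N j j').trace
        = ((S * A j) * (A j' * (A j')ᴴ) * ((A j)ᴴ * S)).trace := by
      intro j j'
      congr 1
      simp only [hN, Matrix.conjTranspose_mul, Matrix.conjTranspose_conjTranspose, hSH, mul_assoc]
    calc ∑ j : Fin d, ∑ j' : Fin d, ((N j j')ᴴ * N j j').trace
        = ∑ j : Fin d, ((S * A j) * (∑ j' : Fin d, A j' * (A j')ᴴ) * ((A j)ᴴ * S)).trace := by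
          refine Finset.sum_congr rfl fun j _ => ?_
          rw [Finset.mul_sum, Finset.sum_mul, Matrix.trace_sum]
          exact Finset.sum_congr rfl fun j' _ => step1 j j'
      _ = ∑ j : Fin d, ((A j * (A j)ᴴ) * Λ).trace := by
          rw [hgauge]
          refine Finset.sum_congr rfl fun j _ => ?_
          rw [mul_one, mul_assoc, Matrix.trace_mul_comm]
          rw [← hSS]
          congr 1
          simp only [mul_assoc]
      _ = ((∑ j : Fin d, A j * (A j)ᴴ) * Λ).trace := by rw [Finset.sum_mul, Matrix.trace_sum]
      _ = Λ.trace := by rw [hgauge, one_mul]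
      _ = 1 := by
          rw [hΛ, Matrix.trace_diagonal, ← Complex.ofReal_sum, hf1, Complex.ofReal_one]
  -- real versions
  set t : ℝ := (P * Λ * P).trace.re with ht
  have hBre : ∑ p : Fin d × Fin d, ((M p.1 p.2)ᴴ * M p.1 p.2).trace.re = t := by
    rw [ht, ← hB, Fintype.sum_prod_type]
    simp [Complex.re_sum]
  have hCre : ∑ p : Fin d × Fin d, ((N p.1 p.2)ᴴ * N p.1 p.2).trace.re = 1 := by
    have := congrArg Complex.re hC
    simp only [Complex.one_re] at this
    rw [← this, Fintype.sum_prod_type]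
    simp [Complex.re_sum]
  set m : Fin d × Fin d → ℝ :=
    fun p => Real.sqrt (((M p.1 p.2)ᴴ * M p.1 p.2).trace.re) with hm
  set nn : Fin d × Fin d → ℝ :=
    fun p => Real.sqrt (((N p.1 p.2)ᴴ * N p.1 p.2).trace.re) with hnn
  have hmsq : ∑ p : Fin d × Fin d, m p ^ 2 = t := by
    rw [← hBre]
    exact Finset.sum_congr rfl fun p _ =>
      Real.sq_sqrt (trace_conjTranspose_mul_re_nonneg _)
  have hnsq : ∑ p : Fin d × Fin d, nn p ^ 2 = 1 := by
    rw [← hCre]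
    exact Finset.sum_congr rfl fun p _ =>
      Real.sq_sqrt (trace_conjTranspose_mul_re_nonneg _)
  have htnn : 0 ≤ t := by
    rw [← hmsq]
    exact Finset.sum_nonneg fun p _ => sq_nonneg _
  have hmsum : ∑ p : Fin d × Fin d, m p ≤ d * Real.sqrt t := by
    have h := Finset.sum_mul_sq_le_sq_mul_sq Finset.univ m (fun _ => (1 : ℝ))
    simp only [mul_one, one_pow, Finset.sum_const, Finset.card_univ, nsmul_eq_mul, Fintype.card_prod, Fintype.card_fin, Nat.cast_mul] at h
    rw [hmsq] at h
    have hge : 0 ≤ ∑ p : Fin d × Fin d, m p := Finset.sum_nonneg fun p _ => Real.sqrt_nonneg _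
    calc ∑ p : Fin d × Fin d, m p = Real.sqrt ((∑ p : Fin d × Fin d, m p) ^ 2) :=
          (Real.sqrt_sq hge).symm
      _ ≤ Real.sqrt (t * ((d : ℝ) * (d : ℝ))) := Real.sqrt_le_sqrt h
      _ = d * Real.sqrt t := by
          rw [Real.sqrt_mul htnn, mul_comm]
          congr 1
          rw [show ((d:ℝ) * d) = (d:ℝ)^2 by ring, Real.sqrt_sq (by positivity)]
  have hnsum : ∑ p : Fin d × Fin d, nn p ≤ d := by
    have h := Finset.sum_mul_sq_le_sq_mul_sq Finset.univ nn (fun _ => (1 : ℝ))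
    simp only [mul_one, one_pow, Finset.sum_const, Finset.card_univ, nsmul_eq_mul, Fintype.card_prod, Fintype.card_fin, Nat.cast_mul] at h
    rw [hnsq, one_mul] at h
    have hge : 0 ≤ ∑ p : Fin d × Fin d, nn p := Finset.sum_nonneg fun p _ => Real.sqrt_nonneg _
    calc ∑ p : Fin d × Fin d, nn p = Real.sqrt ((∑ p : Fin d × Fin d, nn p) ^ 2) :=
          (Real.sqrt_sq hge).symm
      _ ≤ Real.sqrt ((d : ℝ) * (d : ℝ)) := Real.sqrt_le_sqrt h
      _ = d := by
          rw [show ((d:ℝ) * d) = (d:ℝ)^2 by ring, Real.sqrt_sq (by positivity)]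
  -- put it together
  have hterm : ∀ i i' j j',
      ‖((A j)ᴴ * Λ * A i * P * A i' * (A j')ᴴ).trace‖ ≤ m (i, i') * nn (j, j') := by
    intro i i' j j'
    rw [hT i i' j j']
    exact abs_trace_mul_le (M i i') (N j j')
  calc ∑ i : Fin d, ∑ i' : Fin d, ∑ j : Fin d, ∑ j' : Fin d,
        ‖((A j)ᴴ * Λ * A i * P * A i' * (A j')ᴴ).trace‖
      ≤ ∑ i : Fin d, ∑ i' : Fin d, ∑ j : Fin d, ∑ j' : Fin d, m (i, i') * nn (j, j') := by
        refine Finset.sum_le_sum fun i _ => Finset.sum_le_sum fun i' _ =>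
          Finset.sum_le_sum fun j _ => Finset.sum_le_sum fun j' _ => hterm i i' j j'
    _ = (∑ p : Fin d × Fin d, m p) * (∑ p : Fin d × Fin d, nn p) := by
        rw [Fintype.sum_prod_type, Fintype.sum_prod_type, Finset.sum_mul]
        refine Finset.sum_congr rfl fun i _ => ?_
        rw [Finset.sum_mul]
        refine Finset.sum_congr rfl fun i' _ => ?_
        rw [Finset.mul_sum]
        refine Finset.sum_congr rfl fun j _ => ?_
        rw [Finset.mul_sum]
    _ ≤ (d * Real.sqrt t) * d := by
        refine mul_le_mul hmsum hnsum (Finset.sum_nonneg fun p _ => Real.sqrt_nonneg _) ?_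
        positivity
    _ = (d : ℝ) ^ 2 * Real.sqrt t := by ring
end

section
/- Let |ψ⟩ be a normalized state of N spins and suppose for each cut α = 1,...,N-1 the Schmidt tail satisfies ε_α(D) = Σ_{i>D} μ^{[α]}_i where μ^{[α]} are the nonincreasing eigenvalues of the reduced density operator of the first α spins. Then there exists a matrix product state |ψ_D⟩ of bond dimension D (with ⟨ψ_D|ψ_D⟩ ≤ 1) such that ‖|ψ⟩ - |ψ_D⟩‖² ≤ 2 Σ_{α=1}^{N-1} ε_α(D). -/
noncomputable section

open scoped BigOperators

/-- Splice a configuration of the first `α` sites with one of the remaining `N - α`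
sites into a configuration of all `N` sites. -/
def splice {N d : ℕ} (α : ℕ) (hα : α ≤ N) (x : Fin α → Fin d)
    (r : Fin (N - α) → Fin d) : Fin N → Fin d := fun k =>
  if h : (k : ℕ) < α then x ⟨k, h⟩ else r ⟨(k : ℕ) - α, by omega⟩

/-- The reduced density operator of the first `α` spins of the pure state `ψ`. -/
def reducedDM {N d : ℕ} (ψ : (Fin N → Fin d) → ℂ) (α : ℕ) (hα : α ≤ N) :
    Matrix (Fin α → Fin d) (Fin α → Fin d) ℂ :=
  Matrix.of fun x y =>
    ∑ r : Fin (N - α) → Fin d, ψ (splice α hα x r) * star (ψ (splice α hα y r))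

/-- `φ` is a matrix product state of bond dimension `D` on `N` sites of local
dimension `d`: `φ(i₁,…,i_N) = tr[A^[1]i₁ ⋯ A^[N]i_N]` with `D × D` matrices. -/
def IsMPS {N d : ℕ} (D : ℕ) (φ : (Fin N → Fin d) → ℂ) : Prop :=
  ∃ A : Fin N → Fin d → Matrix (Fin D) (Fin D) ℂ,
    ∀ c : Fin N → Fin d, φ c = ((List.ofFn fun k => A k (c k)).prod).trace

namespace VC
variable {N d : ℕ}

def leftpart (α : ℕ) (hα : α ≤ N) (c : Fin N → Fin d) : Fin α → Fin d :=
  fun k => c ⟨k, by omega⟩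

def rightpart (α : ℕ) (hα : α ≤ N) (c : Fin N → Fin d) : Fin (N - α) → Fin d :=
  fun k => c ⟨α + k, by omega⟩

lemma splice_left_right (α : ℕ) (hα : α ≤ N) (c : Fin N → Fin d) :
    splice α hα (leftpart α hα c) (rightpart α hα c) = c := by
  funext k
  simp only [splice, leftpart, rightpart]
  split_ifs with h
  · rfl
  · congr 1; ext; simp; omega

lemma leftpart_splice (α : ℕ) (hα : α ≤ N) (x : Fin α → Fin d) (r : Fin (N - α) → Fin d) :
    leftpart α hα (splice α hα x r) = x := by
  funext k
  simp only [splice, leftpart]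
  rw [dif_pos k.isLt]

lemma rightpart_splice (α : ℕ) (hα : α ≤ N) (x : Fin α → Fin d) (r : Fin (N - α) → Fin d) :
    rightpart α hα (splice α hα x r) = r := by
  funext k
  simp only [splice, rightpart]
  rw [dif_neg (by omega)]
  congr 1; ext; simp

def spliceEquiv (α : ℕ) (hα : α ≤ N) :
    ((Fin α → Fin d) × (Fin (N - α) → Fin d)) ≃ (Fin N → Fin d) where
  toFun p := splice α hα p.1 p.2
  invFun c := (leftpart α hα c, rightpart α hα c)
  left_inv p := by simp [leftpart_splice, rightpart_splice]
  right_inv c := splice_left_right α hα c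

lemma sum_splice {M : Type*} [AddCommMonoid M] (α : ℕ) (hα : α ≤ N)
    (f : (Fin N → Fin d) → M) :
    (∑ x : Fin α → Fin d, ∑ r : Fin (N - α) → Fin d, f (splice α hα x r)) = ∑ c, f c := by
  rw [← (spliceEquiv α hα).sum_comp f, Fintype.sum_prod_type]
  rfl


def rowSpace (φ : (Fin N → Fin d) → ℂ) (α : ℕ) (hα : α ≤ N) :
    Submodule ℂ ((Fin (N - α) → Fin d) → ℂ) :=
  Submodule.span ℂ (Set.range fun x : Fin α → Fin d => fun r => φ (splice α hα x r))

def consAt (α : ℕ) (hα : α < N) (i : Fin d) (r : Fin (N - (α + 1)) → Fin d) :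
    Fin (N - α) → Fin d :=
  fun k => if h : (k : ℕ) = 0 then i else r ⟨(k : ℕ) - 1, by omega⟩

def snocAt (α : ℕ) (x : Fin α → Fin d) (i : Fin d) : Fin (α + 1) → Fin d :=
  fun k => if h : (k : ℕ) < α then x ⟨k, h⟩ else i

lemma splice_consAt (α : ℕ) (hα : α < N) (x : Fin α → Fin d) (i : Fin d)
    (r' : Fin (N - (α + 1)) → Fin d) :
    splice α hα.le x (consAt α hα i r') = splice (α + 1) hα (snocAt α x i) r' := by
  funext p
  simp only [splice, consAt, snocAt]
  split_ifs <;> first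
    | rfl
    | omega
    | (congr 1; ext; simp; omega)
    | (exfalso; simp_all; omega)

lemma consAt_eta (α : ℕ) (hα : α < N) (r : Fin (N - α) → Fin d) :
    consAt α hα (r ⟨0, by omega⟩) (fun k => r ⟨(k : ℕ) + 1, by omega⟩) = r := by
  funext k
  simp only [consAt]
  split_ifs with h
  · congr 1; ext; simp [h]
  · congr 1; ext; simp; omega

/-- shifting one site from right to left maps `rowSpace α` into `rowSpace (α+1)`. -/
lemma shift_mem (φ : (Fin N → Fin d) → ℂ) (α : ℕ) (hα : α < N)
    {v : (Fin (N - α) → Fin d) → ℂ} (hv : v ∈ rowSpace φ α hα.le) (i : Fin d) :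
    (fun r' => v (consAt α hα i r')) ∈ rowSpace φ (α + 1) hα := by
  induction hv using Submodule.span_induction with
  | mem v hv =>
    obtain ⟨x, rfl⟩ := hv
    apply Submodule.subset_span
    exact ⟨snocAt α x i, funext fun r' => (congrArg φ (splice_consAt α hα x i r')).symm⟩
  | zero => exact Submodule.zero_mem _
  | add a b _ _ ha hb => exact Submodule.add_mem _ ha hb
  | smul c a _ ha => exact Submodule.smul_mem _ c ha

lemma exists_spanning_family {V : Type*} [AddCommGroup V] [Module ℂ V]
    (p : Submodule ℂ V) [Module.Finite ℂ p] (D : ℕ) (hp : Module.finrank ℂ p ≤ D) :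
    ∃ R : Fin D → V, (∀ j, R j ∈ p) ∧ p ≤ Submodule.span ℂ (Set.range R) := by
  classical
  let b := Module.finBasis ℂ p
  refine ⟨fun j => if h : (j : ℕ) < Module.finrank ℂ p then (b ⟨j, h⟩ : V) else 0, ?_, ?_⟩
  · intro j; dsimp only; split_ifs
    · exact (b _).2
    · exact p.zero_mem
  · intro v hv
    have hmem : (⟨v, hv⟩ : p) ∈ Submodule.span ℂ (Set.range b) := by
      rw [b.span_eq]; trivial
    have := Submodule.mem_map_of_mem (f := p.subtype) hmem
    rw [Submodule.map_span] at this
    refine Submodule.span_mono ?_ this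
    rintro _ ⟨_, ⟨i, rfl⟩, rfl⟩
    refine ⟨⟨(i : ℕ), by omega⟩, ?_⟩
    simp only [Fin.val_mk, Fin.eta, dif_pos i.isLt]
    rfl

lemma listprod_split {M : Type*} [Monoid M] {n m : ℕ} (h : n = m + 1) (f : Fin n → M) :
    (List.ofFn f).prod
      = f ⟨0, by omega⟩ * (List.ofFn fun k : Fin m => f ⟨(k : ℕ) + 1, by omega⟩).prod := by
  subst h
  rw [List.ofFn_succ, List.prod_cons]
  rfl

lemma listprod_empty {M : Type*} [Monoid M] {n : ℕ} (h : n = 0) (f : Fin n → M) :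
    (List.ofFn f).prod = 1 := by
  subst h; simp

def Mprod {N d D : ℕ} (A : Fin N → Fin d → Matrix (Fin D) (Fin D) ℂ) (α : ℕ)
    (r : Fin (N - α) → Fin d) : Matrix (Fin D) (Fin D) ℂ :=
  (List.ofFn fun k : Fin (N - α) => A ⟨α + k, by have := k.isLt; omega⟩ (r k)).prod

lemma Mprod_last {D : ℕ} (A : Fin N → Fin d → Matrix (Fin D) (Fin D) ℂ)
    (r : Fin (N - N) → Fin d) : Mprod A N r = 1 :=
  listprod_empty (by omega) _

lemma Mprod_succ {D : ℕ} (A : Fin N → Fin d → Matrix (Fin D) (Fin D) ℂ) (α : ℕ) (hα : α < N)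
    (r : Fin (N - α) → Fin d) :
    Mprod A α r
      = A ⟨α, hα⟩ (r ⟨0, by omega⟩)
        * Mprod A (α + 1) (fun k => r ⟨(k : ℕ) + 1, by omega⟩) := by
  rw [Mprod, listprod_split (show N - α = (N - (α+1)) + 1 by omega)]
  congr 1
  unfold Mprod
  apply congrArg
  apply congrArg
  funext k
  have h1 : (⟨α + ((⟨(k : ℕ) + 1, by omega⟩ : Fin (N - α)) : ℕ), by omega⟩ : Fin N)
      = ⟨α + 1 + (k : ℕ), by omega⟩ := Fin.ext (by simp; omega)
  rw [h1]


def theA {N d D : ℕ} (B : Fin d → Fin D → ℂ) (Am : ℕ → Fin d → Fin D → Fin D → ℂ) :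
    Fin N → Fin d → Matrix (Fin D) (Fin D) ℂ := fun k i => Matrix.of fun j j' =>
  if (k : ℕ) = 0 then (if (j : ℕ) = 0 then B i j' else 0) else Am (k : ℕ) i j j'

theorem isMPS_of_rank_le (hN : 1 ≤ N) {D : ℕ} (hD : 1 ≤ D) (φ : (Fin N → Fin d) → ℂ)
    (h : ∀ α, 1 ≤ α → (h2 : α ≤ N - 1) → Module.finrank ℂ (rowSpace φ α (by omega)) ≤ D) :
    IsMPS D φ := by
  haveI : NeZero D := ⟨by omega⟩
  rcases eq_or_lt_of_le hN with h1 | hN2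
  · -- N = 1
    subst h1
    refine ⟨fun _ i => Matrix.of fun j j' => if j = 0 ∧ j' = 0 then φ (fun _ => i) else 0, ?_⟩
    intro c
    have : (List.ofFn fun k : Fin 1 =>
        (fun (_ : Fin 1) i => Matrix.of fun j j' : Fin D =>
          if j = 0 ∧ j' = 0 then φ (fun _ => i) else 0) k (c k)).prod
        = Matrix.of fun j j' : Fin D => if j = 0 ∧ j' = 0 then φ (fun _ => c 0) else 0 := by
      simp [List.ofFn_succ]
    rw [this]
    have : (Matrix.of fun j j' : Fin D =>
        if j = 0 ∧ j' = 0 then φ (fun _ => c 0) else 0).trace = φ (fun _ => c 0) := by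
      simp only [Matrix.trace, Matrix.diag, Matrix.of_apply, and_self]
      rw [Finset.sum_ite_eq' Finset.univ (0 : Fin D) (fun _ => φ (fun _ => c 0))]
      simp
    rw [this]
    exact congrArg φ (funext fun k => congrArg c (Subsingleton.elim _ _))
  · -- 2 ≤ N
    have hN1 : 1 ≤ N - 1 := by omega
    have hfam : ∀ α : ℕ, ∃ Rα : Fin D → ((Fin (N - α) → Fin d) → ℂ),
        (∀ (e1 : 1 ≤ α) (e2 : α ≤ N - 1),
          (∀ j, Rα j ∈ rowSpace φ α (by omega)) ∧
            rowSpace φ α (by omega) ≤ Submodule.span ℂ (Set.range Rα)) ∧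
        (N ≤ α → ∀ j r, Rα j r = if (j : ℕ) = 0 then 1 else 0) := by
      intro α
      by_cases hmid : 1 ≤ α ∧ α ≤ N - 1
      · obtain ⟨Rα, hR1, hR2⟩ := exists_spanning_family (rowSpace φ α (by omega)) D
          (h α hmid.1 hmid.2)
        exact ⟨Rα, fun _ _ => ⟨hR1, hR2⟩, fun hge => absurd hge (by omega)⟩
      · exact ⟨fun j _ => if (j : ℕ) = 0 then 1 else 0,
          fun e1 e2 => absurd ⟨e1, e2⟩ hmid, fun _ j r => rfl⟩
    choose R hRmid hRlast using hfam
    have hspan_top : ∀ β, N ≤ β → ∀ v : (Fin (N - β) → Fin d) → ℂ,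
        v ∈ Submodule.span ℂ (Set.range (R β)) := by
      intro β hβ v
      have hz : N - β = 0 := by omega
      haveI : IsEmpty (Fin (N - β)) := by rw [hz]; infer_instance
      have hv : v = (v (IsEmpty.elim ‹IsEmpty (Fin (N - β))› : (Fin (N - β) → Fin d)))
          • R β 0 := by
        funext r
        have h0 : R β 0 r = 1 := by rw [hRlast β hβ]; simp
        rw [Subsingleton.elim (IsEmpty.elim ‹IsEmpty (Fin (N - β))› : (Fin (N - β) → Fin d)) r]
        simp [h0]
      rw [hv]
      exact Submodule.smul_mem _ _ (Submodule.subset_span ⟨0, rfl⟩)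
    have htrans : ∀ s (hs1 : 1 ≤ s) (hs2 : s ≤ N - 1), ∀ (i : Fin d) (j : Fin D),
        (fun r' => R s j (consAt s (by omega) i r'))
          ∈ Submodule.span ℂ (Set.range (R (s+1))) := by
      intro s hs1 hs2 i j
      have hm := shift_mem φ s (by omega) ((hRmid s hs1 hs2).1 j) i
      by_cases hend : s + 1 ≤ N - 1
      · exact (hRmid (s+1) (by omega) hend).2 hm
      · exact hspan_top (s+1) (by omega) _
    have hAex : ∀ (s : ℕ) (i : Fin d) (j : Fin D), ∃ row : Fin D → ℂ,
        ∀ (hs1 : 1 ≤ s) (hs2 : s ≤ N - 1) (r' : Fin (N - (s+1)) → Fin d),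
          (∑ j', row j' * R (s+1) j' r') = R s j (consAt s (by omega) i r') := by
      intro s i j
      by_cases hs : 1 ≤ s ∧ s ≤ N - 1
      · obtain ⟨cf, hcf⟩ := (Submodule.mem_span_range_iff_exists_fun ℂ).mp (htrans s hs.1 hs.2 i j)
        refine ⟨cf, fun _ _ r' => ?_⟩
        rw [← congrFun hcf r']
        simp [Finset.sum_apply, Pi.smul_apply, smul_eq_mul]
      · exact ⟨0, fun hs1 hs2 => absurd ⟨hs1, hs2⟩ hs⟩
    choose Am hAm using hAex
    have hBex : ∀ i : Fin d, ∃ row : Fin D → ℂ,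
        ∀ r : Fin (N - 1) → Fin d,
          (∑ j', row j' * R 1 j' r) = φ (splice 1 (by omega) (fun _ => i) r) := by
      intro i
      have hgen : (fun r => φ (splice 1 (by omega) (fun _ : Fin 1 => i) r))
          ∈ rowSpace φ 1 (by omega) := Submodule.subset_span ⟨fun _ => i, rfl⟩
      obtain ⟨cf, hcf⟩ := (Submodule.mem_span_range_iff_exists_fun ℂ).mp ((hRmid 1 le_rfl hN1).2 hgen)
      refine ⟨cf, fun r => ?_⟩
      rw [← congrFun hcf r]
      simp [Finset.sum_apply, Pi.smul_apply, smul_eq_mul]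
    choose B hB using hBex
    refine ⟨theA B Am, ?_⟩
    have hA0 : ∀ (hs : (0:ℕ) < N) (i : Fin d) (j j' : Fin D),
        theA (N := N) B Am ⟨0, hs⟩ i j j' = if (j : ℕ) = 0 then B i j' else 0 := by
      intro hs i j j'; simp [theA]
    have hApos : ∀ (s : ℕ) (hs : s < N), 1 ≤ s → ∀ (i : Fin d) (j j' : Fin D),
        theA (N := N) B Am ⟨s, hs⟩ i j j' = Am s i j j' := by
      intro s hs hs1 i j j'; simp only [theA, Matrix.of_apply]; rw [if_neg (by omega)]
    -- main claim
    have claim : ∀ t α, α + t = N → 1 ≤ α → ∀ (j : Fin D) (r : Fin (N - α) → Fin d),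
        R α j r = Mprod (theA B Am) α r j 0 := by
      intro t
      induction t with
      | zero =>
        intro α hα _ j r
        have hα' : α = N := by omega
        subst hα'
        have e1 : Mprod (theA B Am) α r = 1 := Mprod_last _ r
        rw [e1, hRlast α le_rfl, Matrix.one_apply]
        by_cases hj : j = (0 : Fin D)
        · rw [if_pos hj, if_pos (by simp [hj])]
        · rw [if_neg hj, if_neg (fun h => hj (Fin.ext (by simp [h])))]
      | succ t IH =>
        intro α hα hα1 j r
        have IH' := IH (α + 1) (by omega)
        by_cases hαtop : α = N
        · subst hαtop
          have e1 : Mprod (theA B Am) α r = 1 := Mprod_last _ r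
          rw [e1, hRlast α le_rfl, Matrix.one_apply]
          by_cases hj : j = (0 : Fin D)
          · rw [if_pos hj, if_pos (by simp [hj])]
          · rw [if_neg hj, if_neg (fun h => hj (Fin.ext (by simp [h])))]
        · have hα2 : α ≤ N - 1 := by omega
          have hαN : α < N := by omega
          have IH'' := IH' (by omega)
          rw [Mprod_succ (theA B Am) α hαN r, Matrix.mul_apply]
          have e2 : R α j r
              = R α j (consAt α hαN (r ⟨0, by omega⟩)
                  (fun k => r ⟨(k : ℕ) + 1, by omega⟩)) := by
            rw [consAt_eta]
          rw [e2, ← hAm α (r ⟨0, by omega⟩) j hα1 hα2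
            (fun k => r ⟨(k : ℕ) + 1, by omega⟩)]
          refine Finset.sum_congr rfl fun j' _ => ?_
          rw [hApos α hαN hα1, IH'']
    -- assemble
    intro c
    rw [listprod_split (show N = (N-1)+1 by omega) (fun k : Fin N => theA B Am k (c k))]
    have hfac : (List.ofFn fun k : Fin (N-1) =>
          theA (N := N) B Am ⟨(k : ℕ) + 1, by omega⟩ (c ⟨(k : ℕ) + 1, by omega⟩)).prod
        = Mprod (theA B Am) 1 (fun k : Fin (N - 1) => c ⟨1 + (k : ℕ), by omega⟩) := by
      unfold Mprod
      apply congrArg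
      apply congrArg
      funext k
      have e3 : (⟨(k : ℕ) + 1, by omega⟩ : Fin N) = ⟨1 + (k : ℕ), by omega⟩ :=
        Fin.ext (show (k : ℕ) + 1 = 1 + (k : ℕ) by omega)
      rw [e3]
    rw [hfac]
    have claim1 := claim (N - 1) 1 (by omega) le_rfl
    have e7 : splice 1 (by omega) (fun _ : Fin 1 => c ⟨0, by omega⟩)
        (fun k : Fin (N - 1) => c ⟨1 + (k : ℕ), by omega⟩) = c := by
      funext p
      simp only [splice]
      split_ifs with hp
      · exact congrArg c (Fin.ext (show (0 : ℕ) = (p : ℕ) by omega))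
      · exact congrArg c (Fin.ext (show 1 + ((p : ℕ) - 1) = (p : ℕ) by omega))
    have e4 : ∀ j jj : Fin D,
        theA (N := N) B Am ⟨0, by omega⟩ (c ⟨0, by omega⟩) j jj
          = if j = (0 : Fin D) then B (c ⟨0, by omega⟩) jj else 0 := by
      intro j jj
      rw [hA0]
      by_cases hj : j = (0 : Fin D)
      · rw [if_pos (by simp [hj]), if_pos hj]
      · rw [if_neg (fun h => hj (Fin.ext (by simp [h]))), if_neg hj]
    symm
    rw [Matrix.trace]
    simp only [Matrix.diag, Matrix.mul_apply]
    calc ∑ j : Fin D, ∑ j' : Fin D,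
          theA (N := N) B Am ⟨0, by omega⟩ (c ⟨0, by omega⟩) j j'
            * Mprod (theA B Am) 1 (fun k : Fin (N - 1) => c ⟨1 + (k : ℕ), by omega⟩) j' j
        = ∑ j : Fin D, if j = (0 : Fin D) then
            ∑ j' : Fin D, B (c ⟨0, by omega⟩) j'
              * Mprod (theA B Am) 1 (fun k : Fin (N - 1) => c ⟨1 + (k : ℕ), by omega⟩) j' j
          else 0 := by
          refine Finset.sum_congr rfl fun j _ => ?_
          simp only [e4, ite_mul, zero_mul]
          by_cases hj : j = (0 : Fin D)
          · simp [hj]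
          · simp [hj]
      _ = ∑ j' : Fin D, B (c ⟨0, by omega⟩) j'
            * Mprod (theA B Am) 1 (fun k : Fin (N - 1) => c ⟨1 + (k : ℕ), by omega⟩) j' 0 := by
          rw [Finset.sum_ite_eq' Finset.univ (0 : Fin D)]
          simp
      _ = ∑ j' : Fin D, B (c ⟨0, by omega⟩) j'
            * R 1 j' (fun k : Fin (N - 1) => c ⟨1 + (k : ℕ), by omega⟩) := by
          refine Finset.sum_congr rfl fun j' _ => ?_
          rw [claim1 j' (fun k : Fin (N - 1) => c ⟨1 + (k : ℕ), by omega⟩)]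
      _ = φ c := by rw [hB]; exact congrArg φ e7

/-! ### Projection machinery -/

def coeffT (α : ℕ) (hα : α ≤ N) (U : Matrix (Fin α → Fin d) (Fin α → Fin d) ℂ)
    (φ : (Fin N → Fin d) → ℂ) (x : Fin α → Fin d) (r : Fin (N - α) → Fin d) : ℂ :=
  ∑ y, star (U y x) * φ (splice α hα y r)

def proj (α : ℕ) (hα : α ≤ N) (U : Matrix (Fin α → Fin d) (Fin α → Fin d) ℂ)
    (S : Finset (Fin α → Fin d)) (φ : (Fin N → Fin d) → ℂ) : (Fin N → Fin d) → ℂ :=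
  fun c => ∑ x ∈ S, U (leftpart α hα c) x * coeffT α hα U φ x (rightpart α hα c)

lemma sum_mul_star {ι : Type*} [Fintype ι] (f : ι → ℂ) :
    ∑ i, f i * star (f i) = ((∑ i, Complex.normSq (f i) : ℝ) : ℂ) := by
  rw [Complex.ofReal_sum]
  exact Finset.sum_congr rfl fun i _ => Complex.mul_conj (f i)

lemma coeffT_sub (α : ℕ) (hα : α ≤ N) (U : Matrix (Fin α → Fin d) (Fin α → Fin d) ℂ)
    (φ₁ φ₂ : (Fin N → Fin d) → ℂ) (x : Fin α → Fin d) (r : Fin (N - α) → Fin d) :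
    coeffT α hα U (fun c => φ₁ c - φ₂ c) x r = coeffT α hα U φ₁ x r - coeffT α hα U φ₂ x r := by
  simp only [coeffT, mul_sub, Finset.sum_sub_distrib]

lemma vec_parseval {n : Type*} [Fintype n] [DecidableEq n] (U : Matrix n n ℂ)
    (hU2 : U * star U = 1) (v : n → ℂ) :
    ∑ x, (star U).mulVec v x * star ((star U).mulVec v x) = ∑ y, v y * star (v y) := by
  have h1 : ∑ x, (star U).mulVec v x * star ((star U).mulVec v x)
      = dotProduct ((star U).mulVec v) (star ((star U).mulVec v)) := rfl
  rw [h1, dotProduct_comm, Matrix.star_mulVec,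
    ← Matrix.star_eq_conjTranspose (star U), star_star, ← Matrix.dotProduct_mulVec,
    Matrix.mulVec_mulVec, hU2, Matrix.one_mulVec]
  simp only [dotProduct]
  exact Finset.sum_congr rfl fun y _ => mul_comm _ _

lemma coeffT_parseval (α : ℕ) (hα : α ≤ N) (U : Matrix (Fin α → Fin d) (Fin α → Fin d) ℂ)
    (hU2 : U * star U = 1) (φ : (Fin N → Fin d) → ℂ) :
    (∑ x, ∑ r, Complex.normSq (coeffT α hα U φ x r)) = ∑ c, Complex.normSq (φ c) := by
  have key : ∀ r : Fin (N - α) → Fin d,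
      (∑ x, coeffT α hα U φ x r * star (coeffT α hα U φ x r))
        = ∑ y, φ (splice α hα y r) * star (φ (splice α hα y r)) := by
    intro r
    have : ∀ x, coeffT α hα U φ x r = (star U).mulVec (fun y => φ (splice α hα y r)) x := by
      intro x
      simp only [coeffT, Matrix.mulVec, dotProduct, Matrix.star_apply]
    simp only [this]
    exact vec_parseval U hU2 _
  have hcx : (∑ x, ∑ r, coeffT α hα U φ x r * star (coeffT α hα U φ x r))
      = ∑ c, φ c * star (φ c) := by
    rw [Finset.sum_comm]
    calc ∑ r, ∑ x, coeffT α hα U φ x r * star (coeffT α hα U φ x r)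
        = ∑ r, ∑ y, φ (splice α hα y r) * star (φ (splice α hα y r)) := by
          exact Finset.sum_congr rfl fun r _ => key r
      _ = ∑ c, φ c * star (φ c) := by
          rw [← sum_splice α hα (fun c => φ c * star (φ c))]
          exact Finset.sum_comm
  have lhs : (∑ x, ∑ r, coeffT α hα U φ x r * star (coeffT α hα U φ x r))
      = ((∑ x, ∑ r, Complex.normSq (coeffT α hα U φ x r) : ℝ) : ℂ) := by
    rw [Complex.ofReal_sum]
    exact Finset.sum_congr rfl fun x _ => sum_mul_star _
  have rhs : (∑ c, φ c * star (φ c)) = ((∑ c, Complex.normSq (φ c) : ℝ) : ℂ) :=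
    sum_mul_star _
  rw [lhs, rhs] at hcx
  exact_mod_cast hcx

lemma coeffT_proj (α : ℕ) (hα : α ≤ N) (U : Matrix (Fin α → Fin d) (Fin α → Fin d) ℂ)
    (hU1 : star U * U = 1) (S : Finset (Fin α → Fin d)) (φ : (Fin N → Fin d) → ℂ)
    (x : Fin α → Fin d) (r : Fin (N - α) → Fin d) :
    coeffT α hα U (proj α hα U S φ) x r = if x ∈ S then coeffT α hα U φ x r else 0 := by
  have h1 : ∀ y, proj α hα U S φ (splice α hα y r)
      = U.mulVec (fun x' => if x' ∈ S then coeffT α hα U φ x' r else 0) y := by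
    intro y
    simp only [proj, leftpart_splice, rightpart_splice, Matrix.mulVec, dotProduct,
      mul_ite, mul_zero]
    rw [Finset.sum_ite_mem, Finset.univ_inter]
  calc coeffT α hα U (proj α hα U S φ) x r
      = (star U).mulVec (U.mulVec (fun x' => if x' ∈ S then coeffT α hα U φ x' r else 0)) x := by
        simp only [coeffT, Matrix.mulVec, dotProduct, Matrix.star_apply, h1]
    _ = _ := by
        rw [Matrix.mulVec_mulVec, hU1, Matrix.one_mulVec]

lemma coeff_rho (α : ℕ) (hα : α ≤ N) (U : Matrix (Fin α → Fin d) (Fin α → Fin d) ℂ)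
    (ψ : (Fin N → Fin d) → ℂ) (x : Fin α → Fin d) :
    ∑ r, coeffT α hα U ψ x r * star (coeffT α hα U ψ x r)
      = (star U * reducedDM ψ α hα * U) x x := by
  rw [Matrix.mul_assoc, Matrix.mul_apply]
  calc ∑ r, coeffT α hα U ψ x r * star (coeffT α hα U ψ x r)
      = ∑ r, ∑ y, ∑ y', (star (U y x) * ψ (splice α hα y r))
          * (U y' x * star (ψ (splice α hα y' r))) := by
        refine Finset.sum_congr rfl fun r _ => ?_
        simp only [coeffT]
        rw [star_sum, Finset.sum_mul_sum]
        refine Finset.sum_congr rfl fun y _ => Finset.sum_congr rfl fun y' _ => ?_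
        rw [star_mul', star_star]
    _ = ∑ y, ∑ y', star (U y x)
          * ((∑ r, ψ (splice α hα y r) * star (ψ (splice α hα y' r))) * U y' x) := by
        rw [Finset.sum_comm]
        refine Finset.sum_congr rfl fun y _ => ?_
        rw [Finset.sum_comm]
        refine Finset.sum_congr rfl fun y' _ => ?_
        simp only [Finset.mul_sum, Finset.sum_mul]
        exact Finset.sum_congr rfl fun r _ => by ring
    _ = ∑ y, star U x y * (reducedDM ψ α hα * U) y x := by
        refine Finset.sum_congr rfl fun y _ => ?_
        rw [Matrix.mul_apply, Finset.mul_sum, Matrix.star_apply]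
        refine Finset.sum_congr rfl fun y' _ => ?_
        rw [reducedDM, Matrix.of_apply]

lemma err_step (α : ℕ) (hα : α ≤ N) (U : Matrix (Fin α → Fin d) (Fin α → Fin d) ℂ)
    (hU1 : star U * U = 1) (hU2 : U * star U = 1) (S : Finset (Fin α → Fin d))
    (ψ φ : (Fin N → Fin d) → ℂ) :
    ∑ c, Complex.normSq (ψ c - proj α hα U S φ c)
      ≤ (∑ x ∈ Sᶜ, ∑ r, Complex.normSq (coeffT α hα U ψ x r))
        + ∑ c, Complex.normSq (ψ c - φ c) := by
  have hL : ∑ c, Complex.normSq (ψ c - proj α hα U S φ c)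
      = (∑ x ∈ S, ∑ r, Complex.normSq (coeffT α hα U ψ x r - coeffT α hα U φ x r))
        + ∑ x ∈ Sᶜ, ∑ r, Complex.normSq (coeffT α hα U ψ x r) := by
    rw [← coeffT_parseval α hα U hU2 (fun c => ψ c - proj α hα U S φ c)]
    rw [← Finset.sum_add_sum_compl S]
    congr 1
    · refine Finset.sum_congr rfl fun x hx => Finset.sum_congr rfl fun r _ => ?_
      rw [coeffT_sub, coeffT_proj α hα U hU1, if_pos hx]
    · refine Finset.sum_congr rfl fun x hx => Finset.sum_congr rfl fun r _ => ?_
      rw [coeffT_sub, coeffT_proj α hα U hU1, if_neg (by simpa using hx), sub_zero]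
  have hR : (∑ x ∈ S, ∑ r, Complex.normSq (coeffT α hα U ψ x r - coeffT α hα U φ x r))
      ≤ ∑ c, Complex.normSq (ψ c - φ c) := by
    rw [← coeffT_parseval α hα U hU2 (fun c => ψ c - φ c)]
    rw [← Finset.sum_add_sum_compl S (fun x => ∑ r,
      Complex.normSq (coeffT α hα U (fun c => ψ c - φ c) x r))]
    have : (∑ x ∈ S, ∑ r, Complex.normSq (coeffT α hα U ψ x r - coeffT α hα U φ x r))
        = ∑ x ∈ S, ∑ r, Complex.normSq (coeffT α hα U (fun c => ψ c - φ c) x r) := by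
      refine Finset.sum_congr rfl fun x _ => Finset.sum_congr rfl fun r _ => ?_
      rw [coeffT_sub]
    rw [this]
    refine le_add_of_nonneg_right ?_
    exact Finset.sum_nonneg fun x _ => Finset.sum_nonneg fun r _ => Complex.normSq_nonneg _
  rw [hL]
  linarith
lemma contraction (α : ℕ) (hα : α ≤ N) (U : Matrix (Fin α → Fin d) (Fin α → Fin d) ℂ)
    (hU1 : star U * U = 1) (hU2 : U * star U = 1) (S : Finset (Fin α → Fin d))
    (φ : (Fin N → Fin d) → ℂ) :
    ∑ c, Complex.normSq (proj α hα U S φ c) ≤ ∑ c, Complex.normSq (φ c) := by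
  rw [← coeffT_parseval α hα U hU2 (proj α hα U S φ), ← coeffT_parseval α hα U hU2 φ]
  refine Finset.sum_le_sum fun x _ => ?_
  refine Finset.sum_le_sum fun r _ => ?_
  rw [coeffT_proj α hα U hU1]
  split_ifs
  · exact le_refl _
  · simpa using Complex.normSq_nonneg _

lemma proj_rowSpace_le (α : ℕ) (hα : α ≤ N) (U : Matrix (Fin α → Fin d) (Fin α → Fin d) ℂ)
    (S : Finset (Fin α → Fin d)) (φ : (Fin N → Fin d) → ℂ) :
    rowSpace (proj α hα U S φ) α hα
      ≤ Submodule.span ℂ ((fun x => fun r => coeffT α hα U φ x r) '' (S : Set _)) := by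
  rw [rowSpace, Submodule.span_le]
  rintro _ ⟨a, rfl⟩
  show (fun r => proj α hα U S φ (splice α hα a r)) ∈ _
  have : (fun r => proj α hα U S φ (splice α hα a r))
      = ∑ x ∈ S, U a x • (fun r => coeffT α hα U φ x r) := by
    funext r
    rw [Finset.sum_apply]
    simp only [proj, leftpart_splice, rightpart_splice, Pi.smul_apply, smul_eq_mul]
  rw [this]
  exact Submodule.sum_mem _ fun x hx => Submodule.smul_mem _ _
    (Submodule.subset_span ⟨x, hx, rfl⟩)

def mix (β α : ℕ) (hβα : β ≤ α) (y : Fin β → Fin d) (a : Fin α → Fin d) : Fin α → Fin d :=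
  fun k => if h : (k : ℕ) < β then y ⟨k, h⟩ else a k

lemma splice_mix (β α : ℕ) (hβα : β ≤ α) (hα : α ≤ N) (y : Fin β → Fin d)
    (a : Fin α → Fin d) (r : Fin (N - α) → Fin d) :
    splice β (by omega) y (rightpart β (by omega) (splice α hα a r))
      = splice α hα (mix β α hβα y a) r := by
  funext p
  simp only [splice, rightpart, mix]
  split_ifs <;> first
    | rfl
    | omega
    | (exfalso; omega)
    | (congr 1; ext; simp; omega)

lemma leftpart_splice_of_le (β α : ℕ) (hβα : β ≤ α) (hα : α ≤ N)
    (a : Fin α → Fin d) (r : Fin (N - α) → Fin d) :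
    leftpart β (by omega) (splice α hα a r) = fun k : Fin β => a ⟨(k : ℕ), by omega⟩ := by
  funext k
  simp only [leftpart, splice]
  rw [dif_pos (by omega)]

lemma proj_rowSpace_mono (β α : ℕ) (hβα : β ≤ α) (hα : α ≤ N)
    (U : Matrix (Fin β → Fin d) (Fin β → Fin d) ℂ) (S : Finset (Fin β → Fin d))
    (φ : (Fin N → Fin d) → ℂ) :
    rowSpace (proj β (by omega) U S φ) α hα ≤ rowSpace φ α hα := by
  rw [rowSpace, Submodule.span_le]
  rintro _ ⟨a, rfl⟩
  show (fun r => proj β (by omega) U S φ (splice α hα a r)) ∈ _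
  have expand : (fun r => proj β (by omega) U S φ (splice α hα a r))
      = ∑ x ∈ S, ∑ y : Fin β → Fin d,
          (U (fun k : Fin β => a ⟨(k : ℕ), by omega⟩) x * star (U y x))
            • (fun r => φ (splice α hα (mix β α hβα y a) r)) := by
    funext r
    rw [Finset.sum_apply]
    simp only [proj, coeffT, Finset.sum_apply, Pi.smul_apply, smul_eq_mul]
    refine Finset.sum_congr rfl fun x hx => ?_
    rw [leftpart_splice_of_le β α hβα hα, Finset.mul_sum]
    refine Finset.sum_congr rfl fun y _ => ?_
    rw [splice_mix β α hβα hα y a r]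
    ring
  rw [expand]
  exact Submodule.sum_mem _ fun x _ => Submodule.sum_mem _ fun y _ =>
    Submodule.smul_mem _ _ (Submodule.subset_span ⟨mix β α hβα y a, rfl⟩)

lemma conj_spec {n : Type*} [Fintype n] [DecidableEq n] (U ρ dg : Matrix n n ℂ)
    (hU1 : star U * U = 1) (hρ : ρ = U * dg * star U) : star U * ρ * U = dg := by
  have : star U * (U * dg * star U) * U = (star U * U) * dg * (star U * U) := by
    simp only [Matrix.mul_assoc]
  rw [hρ, this, hU1, Matrix.one_mul, Matrix.mul_one]

lemma tail_le {n : Type*} [Fintype n] [DecidableEq n] (ev : n → ℝ) (μa : ℕ → ℝ)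
    (hnn : ∀ i, 0 ≤ μa i) (g : n → ℕ) (hg : Function.Injective g)
    (hgev : ∀ x, μa (g x) = ev x) (h0 : ∀ i, i ∉ Set.range g → μa i = 0) (D : ℕ) :
    (∑ x ∈ Finset.univ.filter (fun x => ¬ g x < D), ev x) ≤ ∑' i, μa (i + D) := by
  classical
  have hzero : ∀ b ∉ (Finset.univ.image g).image (fun t => t - D), μa (b + D) = 0 := by
    intro b hb
    by_contra hne
    have hmem : b + D ∈ Set.range g := by
      by_contra hr; exact hne (h0 _ hr)
    obtain ⟨x, hx⟩ := hmem
    refine hb (Finset.mem_image.mpr ⟨g x, Finset.mem_image.mpr ⟨x, Finset.mem_univ x, rfl⟩, ?_⟩)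
    omega
  rw [tsum_eq_sum hzero]
  have h1 : (∑ x ∈ Finset.univ.filter (fun x => ¬ g x < D), ev x)
      = ∑ t ∈ (Finset.univ.filter (fun x => ¬ g x < D)).image g, μa t := by
    rw [Finset.sum_image (fun x _ y _ h => hg h)]
    exact Finset.sum_congr rfl fun x _ => (hgev x).symm
  have hTge : ∀ t ∈ (Finset.univ.filter (fun x => ¬ g x < D)).image g, D ≤ t := by
    intro t ht
    obtain ⟨x, hx, rfl⟩ := Finset.mem_image.mp ht
    have := Finset.mem_filter.mp hx
    omega
  have h2 : (∑ b ∈ ((Finset.univ.filter (fun x => ¬ g x < D)).image g).image (fun t => t - D),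
          μa (b + D))
      = ∑ t ∈ (Finset.univ.filter (fun x => ¬ g x < D)).image g, μa t := by
    rw [Finset.sum_image (by
      intro t ht t' ht' hh
      have := hTge t ht
      have := hTge t' ht'
      simp only at hh
      omega)]
    refine Finset.sum_congr rfl fun t ht => ?_
    congr 1
    have := hTge t ht
    omega
  rw [h1, ← h2]
  refine Finset.sum_le_sum_of_subset_of_nonneg ?_ (fun i _ _ => hnn _)
  refine Finset.image_subset_image (Finset.image_subset_image ?_)
  exact Finset.filter_subset _ _

end VC


/-- **Lemma 1 (Verstraete–Cirac): MPS approximate states cut by cut.** Let `ψ` be a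
normalized state of `N` spins of dimension `d`, and for each cut `α` let
`μ α : ℕ → ℝ` be the nonincreasingly sorted (zero-padded) eigenvalues of the reduced
density operator of the first `α` spins. Then there is a matrix product state `ψD` of
bond dimension `D`, with `⟨ψD|ψD⟩ ≤ 1`, such that
`‖ψ - ψD‖² ≤ 2 Σ_{α=1}^{N-1} ε_α(D)` where `ε_α(D) = Σ_{i>D} μ α i` is the Schmidt
tail past the `D` largest eigenvalues (0-based: `∑' i, μ α (i + D)`). -/
theorem mps_approximation_bound {N d : ℕ} (hN : 1 ≤ N) (hd : 1 ≤ d) (D : ℕ) (hD : 1 ≤ D)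
    (ψ : (Fin N → Fin d) → ℂ)
    (hnorm : ∑ c, Complex.normSq (ψ c) = 1)
    (hH : ∀ (α : ℕ) (hα : α ≤ N), (reducedDM ψ α hα).IsHermitian)
    (μ : ℕ → ℕ → ℝ)
    (hμ : ∀ α : ℕ, ∀ hα : 1 ≤ α ∧ α ≤ N - 1,
      Antitone (μ α) ∧ (∀ i, 0 ≤ μ α i) ∧
      ∃ g : (Fin α → Fin d) → ℕ, Function.Injective g ∧
        (∀ x, μ α (g x) = (hH α (by omega)).eigenvalues x) ∧
        (∀ i, i ∉ Set.range g → μ α i = 0)) :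
    ∃ ψD : (Fin N → Fin d) → ℂ, IsMPS D ψD ∧
      (∑ c, Complex.normSq (ψD c)) ≤ 1 ∧
      ∑ c, Complex.normSq (ψ c - ψD c) ≤
        2 * ∑ α ∈ Finset.Icc 1 (N - 1), ∑' i : ℕ, μ α (i + D) := by
  classical
  have hgex : ∀ α : ℕ, ∃ g : (Fin α → Fin d) → ℕ, ∀ hα : 1 ≤ α ∧ α ≤ N - 1,
      Function.Injective g ∧ (∀ x, μ α (g x) = (hH α (by omega)).eigenvalues x) ∧
        (∀ i, i ∉ Set.range g → μ α i = 0) := by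
    intro α
    by_cases hα : 1 ≤ α ∧ α ≤ N - 1
    · obtain ⟨h1, h2, g, h3, h4, h5⟩ := hμ α hα
      exact ⟨g, fun _ => ⟨h3, h4, h5⟩⟩
    · exact ⟨fun _ => 0, fun h => absurd h hα⟩
  choose g hg using hgex
  let U : ∀ α : ℕ, α ≤ N → Matrix (Fin α → Fin d) (Fin α → Fin d) ℂ :=
    fun α hα => ((hH α hα).eigenvectorUnitary : Matrix (Fin α → Fin d) (Fin α → Fin d) ℂ)
  have hU1 : ∀ α hα, star (U α hα) * U α hα = 1 :=
    fun α hα => (Unitary.mem_iff.mp (hH α hα).eigenvectorUnitary.2).1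
  have hU2 : ∀ α hα, U α hα * star (U α hα) = 1 :=
    fun α hα => (Unitary.mem_iff.mp (hH α hα).eigenvectorUnitary.2).2
  have hspec : ∀ α hα, star (U α hα) * reducedDM ψ α hα * U α hα
      = Matrix.diagonal (RCLike.ofReal ∘ (hH α hα).eigenvalues) :=
    fun α hα => VC.conj_spec _ _ _ (hU1 α hα) ((hH α hα).spectral_theorem)
  have htail : ∀ α (hα : α ≤ N) (x : Fin α → Fin d),
      ∑ r, Complex.normSq (VC.coeffT α hα (U α hα) ψ x r) = (hH α hα).eigenvalues x := by
    intro α hα x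
    have h1 := VC.coeff_rho α hα (U α hα) ψ x
    rw [hspec α hα, Matrix.diagonal_apply_eq, VC.sum_mul_star] at h1
    simp only [Function.comp] at h1
    exact Complex.ofReal_injective h1
  let G : ℕ → (Fin N → Fin d) → ℂ := fun t => Nat.rec ψ (fun t' Gt =>
    if h : t' + 1 ≤ N - 1 then
      VC.proj (N - 1 - t') (by omega) (U (N - 1 - t') (by omega))
        (Finset.univ.filter (fun x => g (N - 1 - t') x < D)) Gt
    else Gt) t
  have hG0 : G 0 = ψ := rfl
  have hGs : ∀ t, G (t + 1) = if h : t + 1 ≤ N - 1 then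
      VC.proj (N - 1 - t) (by omega) (U (N - 1 - t) (by omega))
        (Finset.univ.filter (fun x => g (N - 1 - t) x < D)) (G t)
    else G t := fun t => rfl
  let E : ℕ → ℝ := fun α => if hα : 1 ≤ α ∧ α ≤ N - 1 then
    ∑ x ∈ (Finset.univ.filter (fun x => g α x < D))ᶜ, (hH α (by omega)).eigenvalues x else 0
  have hE : ∀ α (h1 : 1 ≤ α) (h2 : α ≤ N - 1),
      E α = ∑ x ∈ (Finset.univ.filter (fun x => g α x < D))ᶜ,
        (hH α (by omega)).eigenvalues x := fun α h1 h2 => dif_pos ⟨h1, h2⟩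
  -- norm bound
  have hGnorm : ∀ t, ∑ c, Complex.normSq (G t c) ≤ 1 := by
    intro t
    induction t with
    | zero => exact le_of_eq hnorm
    | succ t IH =>
      rw [hGs t]
      split_ifs with h
      · exact le_trans (VC.contraction _ _ _ (hU1 _ _) (hU2 _ _) _ (G t)) IH
      · exact IH
  -- error bound
  have herr : ∀ α (h1 : 1 ≤ α) (h2 : α ≤ N - 1) (φ : (Fin N → Fin d) → ℂ),
      ∑ c, Complex.normSq (ψ c - VC.proj α (by omega) (U α (by omega))
          (Finset.univ.filter (fun x => g α x < D)) φ c)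
        ≤ E α + ∑ c, Complex.normSq (ψ c - φ c) := by
    intro α h1 h2 φ
    have base := VC.err_step α (by omega : α ≤ N) (U α (by omega)) (hU1 _ _) (hU2 _ _)
      (Finset.univ.filter (fun x => g α x < D)) ψ φ
    have etail : (∑ x ∈ (Finset.univ.filter (fun x => g α x < D))ᶜ,
        ∑ r, Complex.normSq (VC.coeffT α (by omega) (U α (by omega)) ψ x r)) = E α := by
      rw [hE α h1 h2]
      exact Finset.sum_congr rfl fun x _ => htail α (by omega) x
    rw [etail] at base
    exact base
  have hGerr : ∀ t, t ≤ N - 1 →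
      ∑ c, Complex.normSq (ψ c - G t c) ≤ ∑ α ∈ Finset.Icc (N - t) (N - 1), E α := by
    intro t
    induction t with
    | zero =>
      intro _
      rw [hG0]
      have h1 : Finset.Icc (N - 0) (N - 1) = ∅ := Finset.Icc_eq_empty (by omega)
      rw [h1]
      simp
    | succ t IH =>
      intro ht
      rw [hGs t, dif_pos ht]
      have step := herr (N - 1 - t) (by omega) (by omega) (G t)
      have hins : Finset.Icc (N - (t + 1)) (N - 1)
          = insert (N - 1 - t) (Finset.Icc (N - t) (N - 1)) := by
        ext a
        simp only [Finset.mem_Icc, Finset.mem_insert]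
        omega
      rw [hins, Finset.sum_insert (by simp only [Finset.mem_Icc]; omega)]
      exact le_trans step (add_le_add_right (IH (by omega)) _)
  -- rank bound
  have hrank : ∀ t α (h1 : 1 ≤ α) (h2 : α ≤ N - 1) (h3 : N - α ≤ t),
      ∃ W : Finset ((Fin (N - α) → Fin d) → ℂ), W.card ≤ D ∧
        VC.rowSpace (G t) α (by omega) ≤ Submodule.span ℂ (W : Set _) := by
    intro t
    induction t with
    | zero => intro α h1 h2 h3; exact (by omega : False).elim
    | succ t IH =>
      intro α h1 h2 h3
      rcases Nat.lt_or_ge t (N - α) with hc | hc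
      · -- N - α = t + 1 : this is the step where the projection at cut α is applied
        have hstep : t + 1 ≤ N - 1 := by omega
        have e : N - 1 - t = α := by omega
        rw [hGs t, dif_pos hstep]
        subst e
        refine ⟨(Finset.univ.filter (fun x => g (N - 1 - t) x < D)).image
          (fun x => fun r => VC.coeffT (N - 1 - t) (by omega) (U (N - 1 - t) (by omega))
            (G t) x r), ?_, ?_⟩
        · refine le_trans Finset.card_image_le ?_
          refine le_trans (Finset.card_le_card_of_injOn (g (N - 1 - t))
            (fun x hx => Finset.mem_range.mpr (Finset.mem_filter.mp hx).2)
            (fun x _ y _ hxy => (hg (N - 1 - t) ⟨h1, h2⟩).1 hxy)) ?_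
          simp
        · rw [Finset.coe_image]
          exact VC.proj_rowSpace_le (N - 1 - t) (by omega) (U (N - 1 - t) (by omega))
            (Finset.univ.filter (fun x => g (N - 1 - t) x < D)) (G t)
      · -- already projected: later projections act on the left and do not increase rank
        obtain ⟨W, hW1, hW2⟩ := IH α h1 h2 hc
        refine ⟨W, hW1, ?_⟩
        rw [hGs t]
        split_ifs with h
        · refine le_trans (VC.proj_rowSpace_mono (N - 1 - t) α (by omega) (by omega)
            (U (N - 1 - t) (by omega)) _ (G t)) hW2
        · exact hW2
  -- conclusion
  refine ⟨G (N - 1), ?_, hGnorm (N - 1), ?_⟩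
  · refine VC.isMPS_of_rank_le hN hD (G (N - 1)) ?_
    intro α h1 h2
    obtain ⟨W, hW1, hW2⟩ := hrank (N - 1) α h1 h2 (by omega)
    refine le_trans (Submodule.finrank_mono hW2) ?_
    exact le_trans (finrank_span_finset_le_card W) hW1
  · have h1 := hGerr (N - 1) le_rfl
    rw [show N - (N - 1) = 1 by omega] at h1
    have h2 : (∑ α ∈ Finset.Icc 1 (N - 1), E α)
        ≤ ∑ α ∈ Finset.Icc 1 (N - 1), ∑' i : ℕ, μ α (i + D) := by
      refine Finset.sum_le_sum fun α hα => ?_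
      have hm := Finset.mem_Icc.mp hα
      have hα1 : 1 ≤ α := hm.1
      have hα2 : α ≤ N - 1 := hm.2
      rw [hE α hα1 hα2]
      have hcompl : (Finset.univ.filter (fun x => g α x < D))ᶜ
          = Finset.univ.filter (fun x => ¬ g α x < D) := by
        ext x; simp
      rw [hcompl]
      exact VC.tail_le ((hH α (by omega)).eigenvalues) (μ α) (hμ α ⟨hα1, hα2⟩).2.1
        (g α) (hg α ⟨hα1, hα2⟩).1 (hg α ⟨hα1, hα2⟩).2.1 (hg α ⟨hα1, hα2⟩).2.2 D
    have h3 : 0 ≤ ∑ α ∈ Finset.Icc 1 (N - 1), ∑' i : ℕ, μ α (i + D) := by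
      refine Finset.sum_nonneg fun α hα => ?_
      have hm := Finset.mem_Icc.mp hα
      exact tsum_nonneg fun i => (hμ α ⟨hm.1, hm.2⟩).2.1 _
    linarith
end
end
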